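/- arXiv:math/0011165 — 7 statements merged into one kernel-verified Lean document; each statement's English description precedes it below -/
import Mathlib

section
/- For all integers n ≥ 0 and 0 ≤ k ≤ n, one has Σ_{j=0}^{⌊n/2⌋} C(n+1, 2j+1) · Σ_{l=0}^{n−k} (−1)^{n−k−l} C(n−2j, n−k−l) C(2j, l) = 2^n · (−1)^{n−k}. -/
open Polynomial Finset in
private lemma coeff_one_sub_X_pow' (c a : ℕ) :
    ((1 - X : ℤ[X]) ^ c).coeff a = (-1)^a * (c.choose a : ℤ) := by
  have h : (1 - X : ℤ[X]) ^ c = ∑ k ∈ range (c+1), C ((-1:ℤ)^k * c.choose k) * X ^ k := by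
    rw [sub_eq_add_neg, add_comm, add_pow]
    refine Finset.sum_congr rfl fun k _ => ?_
    rw [one_pow, mul_one, neg_pow, ← C_eq_natCast]
    rw [map_mul, ← C_1, ← map_neg, C_pow]
    ring
  rw [h, finset_sum_coeff]
  simp only [coeff_C_mul, coeff_X_pow, mul_ite, mul_one, mul_zero]
  rw [Finset.sum_ite_eq (range (c+1)) a]
  by_cases ha : a ∈ range (c+1)
  · simp [ha]
  · simp only [ha, if_false]
    rw [Nat.choose_eq_zero_of_lt (by simpa [Nat.lt_succ_iff] using ha)]
    simp

open Polynomial Finset in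
private lemma key' (n : ℕ) :
    ∑ j ∈ range (n/2+1), C (((n+1).choose (2*j+1) : ℤ)) * ((1 + X)^(2*j) * (1 - X)^(n - 2*j))
    = C ((2:ℤ)^n) * ∑ i ∈ range (n+1), (-X : ℤ[X])^i := by
  have hc : ((2:ℤ[X]) * (1 + X)) ≠ 0 := by
    refine mul_ne_zero (by norm_num) ?_
    intro h
    have := congrArg (fun p => Polynomial.coeff p 0) h
    simp at this
  apply mul_left_cancel₀ hc
  have hneg : (-(2*X) : ℤ[X])^(n+1) = 2^(n+1) * (-X)^(n+1) := by
    rw [show (-(2*X):ℤ[X]) = 2 * (-X) by ring, mul_pow]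
  have hgeom : ((2:ℤ[X]) * (1 + X)) * (C ((2:ℤ)^n) * ∑ i ∈ range (n+1), (-X : ℤ[X])^i)
      = (2:ℤ[X])^(n+1) - (-(2*X))^(n+1) := by
    have hg := geom_sum_mul (-X : ℤ[X]) (n+1)
    have hx : ((1:ℤ[X]) + X) * ∑ i ∈ range (n+1), (-X : ℤ[X])^i = 1 - (-X)^(n+1) := by
      have h : (∑ i ∈ range (n+1), (-X : ℤ[X])^i) * (-(1 + X)) = (-X)^(n+1) - 1 := by
        rw [← hg]; ring_nf
      linear_combination -h
    calc ((2:ℤ[X]) * (1 + X)) * (C ((2:ℤ)^n) * ∑ i ∈ range (n+1), (-X : ℤ[X])^i)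
        = (2 * C ((2:ℤ)^n)) * ((1 + X) * ∑ i ∈ range (n+1), (-X : ℤ[X])^i) := by ring
      _ = (2 * C ((2:ℤ)^n)) * (1 - (-X)^(n+1)) := by rw [hx]
      _ = (2:ℤ[X])^(n+1) - (-(2*X))^(n+1) := by
          have h2 : (C ((2:ℤ)^n) : ℤ[X]) = 2^n := by simp
          rw [h2, hneg]; ring
  rw [hgeom]
  have h1 : ((1+X) + (1-X) : ℤ[X])^(n+1)
      = ∑ i ∈ range (n+2), (1+X)^i * (1-X)^(n+1-i) * ((n+1).choose i : ℤ[X]) := add_pow _ _ _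
  have h2 : ((-(1+X)) + (1-X) : ℤ[X])^(n+1)
      = ∑ i ∈ range (n+2), (-(1+X))^i * (1-X)^(n+1-i) * ((n+1).choose i : ℤ[X]) := add_pow _ _ _
  have hs1 : ((1+X) + (1-X) : ℤ[X]) = 2 := by ring
  have hs2 : ((-(1+X)) + (1-X) : ℤ[X]) = -(2*X) := by ring
  rw [hs1] at h1; rw [hs2] at h2
  rw [h1, h2, ← Finset.sum_sub_distrib]
  have hterm : ∀ i ∈ range (n+2),
      (1+X : ℤ[X])^i * (1-X)^(n+1-i) * ((n+1).choose i : ℤ[X])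
        - (-(1+X))^i * (1-X)^(n+1-i) * ((n+1).choose i : ℤ[X])
      = ((1:ℤ[X]) - (-1)^i) * ((1+X)^i * (1-X)^(n+1-i) * ((n+1).choose i : ℤ[X])) := by
    intro i _
    rw [neg_pow]
    ring
  rw [Finset.sum_congr rfl hterm]
  rw [← Finset.sum_filter_add_sum_filter_not (range (n+2)) (fun i => Odd i)]
  have heven : ∑ i ∈ (range (n+2)).filter (fun i => ¬ Odd i),
      ((1:ℤ[X]) - (-1)^i) * ((1+X)^i * (1-X)^(n+1-i) * ((n+1).choose i : ℤ[X])) = 0 := by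
    refine Finset.sum_eq_zero fun i hi => ?_
    have : Even i := Nat.not_odd_iff_even.mp (Finset.mem_filter.mp hi).2
    rw [this.neg_one_pow]
    ring
  rw [heven, add_zero, Finset.mul_sum]
  refine Finset.sum_nbij' (fun j => 2*j+1) (fun i => i / 2) ?_ ?_ ?_ ?_ ?_
  · intro j hj
    simp only [Finset.mem_range] at hj
    simp only [Finset.mem_filter, Finset.mem_range, Nat.odd_iff]
    omega
  · intro i hi
    simp only [Finset.mem_filter, Finset.mem_range, Nat.odd_iff] at hi
    simp only [Finset.mem_range]
    omega
  · intro j hj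
    omega
  · intro i hi
    simp only [Finset.mem_filter, Finset.mem_range, Nat.odd_iff] at hi
    omega
  · intro j hj
    have he : n + 1 - (2*j+1) = n - 2*j := by omega
    rw [he, Odd.neg_one_pow ⟨j, by ring⟩, C_eq_natCast]
    ring

open Polynomial Finset in
/-- For all integers `n ≥ 0` and `0 ≤ k ≤ n`,
`Σ_{j=0}^{⌊n/2⌋} C(n+1, 2j+1) · Σ_{l=0}^{n−k} (−1)^{n−k−l} C(n−2j, n−k−l) C(2j, l)
  = 2^n · (−1)^{n−k}`. -/
theorem stmt_1 (n k : ℕ) (hk : k ≤ n) :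
    ∑ j ∈ Finset.range (n / 2 + 1), ((n + 1).choose (2 * j + 1) : ℤ) *
      ∑ l ∈ Finset.range (n - k + 1),
        (-1 : ℤ) ^ (n - k - l) * ((n - 2 * j).choose (n - k - l) : ℤ) *
          ((2 * j).choose l : ℤ)
    = 2 ^ n * (-1 : ℤ) ^ (n - k) := by
  set m := n - k with hmdef
  have hm : m ≤ n := Nat.sub_le n k
  have hkey := congrArg (fun p : ℤ[X] => p.coeff m) (key' n)
  simp only [finset_sum_coeff] at hkey
  have hL : ∀ j, ((C (((n+1).choose (2*j+1) : ℤ)) * ((1 + X)^(2*j) * (1 - X)^(n - 2*j))) : ℤ[X]).coeff m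
      = ((n+1).choose (2*j+1) : ℤ) *
        ∑ l ∈ range (m+1), (-1:ℤ)^(m-l) * ((n-2*j).choose (m-l) : ℤ) * ((2*j).choose l : ℤ) := by
    intro j
    rw [coeff_C_mul, coeff_mul, Finset.Nat.sum_antidiagonal_eq_sum_range_succ_mk]
    congr 1
    refine Finset.sum_congr rfl fun l hl => ?_
    rw [coeff_one_add_X_pow, coeff_one_sub_X_pow']
    ring
  have hR : ((C ((2:ℤ)^n) * ∑ i ∈ range (n+1), (-X : ℤ[X])^i) : ℤ[X]).coeff m
      = 2^n * (-1:ℤ)^m := by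
    rw [coeff_C_mul, finset_sum_coeff]
    have hterm : ∀ i : ℕ, ((-X : ℤ[X])^i).coeff m = if m = i then (-1:ℤ)^i else 0 := by
      intro i
      rw [neg_pow, show ((-1 : ℤ[X])^i) = C ((-1:ℤ)^i) by simp, coeff_C_mul, coeff_X_pow]
      simp [mul_ite]
    rw [Finset.sum_congr rfl fun i _ => hterm i]
    rw [Finset.sum_ite_eq (range (n+1)) m]
    simp [Nat.lt_succ_iff, hm]
  rw [Finset.sum_congr rfl fun j _ => hL j, hR] at hkey
  exact hkey
end

section
/- Let W be an n-dimensional complex vector space (n ≥ 1), regarded also as a 2n-dimensional real vector space, and let φ_1,…,φ_{2n} : W → ℂ be ℂ-linear functionals. Set a_k := Re∘φ_k and b_k := Im∘φ_k, which are ℝ-linear functionals on W. Then for every 0 ≤ j ≤ n−1, Alt_{2n} [ a_1∧a_2∧…∧a_{2j+1} ∧ b_{2j+2}∧…∧b_{2n} ] = 0 in Λ^{2n}_ℝ(W*_ℝ) (equivalently, as a real alternating 2n-form on W), where Alt_{2n} acts by simultaneously permuting the pairs (a_k, b_k), i.e., by permuting the functionals φ_1,…,φ_{2n}. (This is the pointwise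 content of Lemma 6.1(I): substituting a_k = d log|f_k| and b_k = d arg f_k for rational functions f_k on an n-dimensional complex manifold.) -/
open ExteriorAlgebra

section AltHelpers

variable {V : Type*} [AddCommGroup V] [Module ℝ V]

noncomputable def altS (N : ℕ) (a b : Fin N → V) (ε : Fin N → Bool) : ExteriorAlgebra ℝ V :=
  ∑ σ : Equiv.Perm (Fin N), (Equiv.Perm.sign σ : ℤ) •
    (ιMulti ℝ N (fun k => if ε k = true then a (σ k) else b (σ k)) : ExteriorAlgebra ℝ V)

lemma altS_comp_perm (N : ℕ) (a b : Fin N → V) (ε : Fin N → Bool) (ρ : Equiv.Perm (Fin N)) :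
    altS N a b (fun k => ε (ρ k)) = altS N a b ε := by
  unfold altS
  refine Fintype.sum_equiv (Equiv.mulRight ρ⁻¹) _ _ (fun σ => ?_)
  have h1 : (fun k => if ε (ρ k) = true then a (σ k) else b (σ k))
      = (fun k => if ε k = true then a ((σ * ρ⁻¹) k) else b ((σ * ρ⁻¹) k)) ∘ ρ := by
    funext k
    simp [Equiv.Perm.mul_apply]
  rw [h1, AlternatingMap.map_perm]
  simp only [Equiv.coe_mulRight]
  rw [Units.smul_def, smul_smul]
  congr 1
  simp [Equiv.Perm.sign_mul, Equiv.Perm.sign_inv, Units.val_mul, mul_comm]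

lemma altS_congr_card (N : ℕ) (a b : Fin N → V) (ε ε' : Fin N → Bool)
    (h : (Finset.univ.filter (fun k => ε k = true)).card
       = (Finset.univ.filter (fun k => ε' k = true)).card) :
    altS N a b ε = altS N a b ε' := by
  classical
  have hc : Fintype.card {x : Fin N // ε' x = true} = Fintype.card {x : Fin N // ε x = true} := by
    rw [Fintype.card_subtype, Fintype.card_subtype, h]
  have hc' : Fintype.card {x : Fin N // ¬ ε' x = true} = Fintype.card {x : Fin N // ¬ ε x = true} := by
    rw [Fintype.card_subtype_compl, Fintype.card_subtype_compl, hc]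
  let e := Fintype.equivOfCardEq hc
  let e' := Fintype.equivOfCardEq hc'
  let ρ : Equiv.Perm (Fin N) := Equiv.subtypeCongr e e'
  have hρ : ∀ k, ε (ρ k) = ε' k := by
    intro k
    by_cases hk : ε' k = true
    · have : ρ k = (e ⟨k, hk⟩ : Fin N) := by
        simp [ρ, Equiv.subtypeCongr, hk]
      rw [this, hk]
      exact (e ⟨k, hk⟩).2
    · have : ρ k = (e' ⟨k, hk⟩ : Fin N) := by
        simp [ρ, Equiv.subtypeCongr, hk]
      rw [this]
      have h2 := (e' ⟨k, hk⟩).2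
      simp only [Bool.not_eq_true] at h2 hk
      rw [h2, hk]
  calc altS N a b ε = altS N a b (fun k => ε' k) := by
        rw [show (fun k => ε' k) = fun k => ε (ρ k) from funext fun k => (hρ k).symm]
        rw [altS_comp_perm]
      _ = altS N a b ε' := rfl

lemma sum_update_eq_trace_smul {N : ℕ} [FiniteDimensional ℝ V] (hN : Module.finrank ℝ V = N)
    (f : V →ₗ[ℝ] V) (w : Fin N → V) :
    ∑ k : Fin N, (ιMulti ℝ N (Function.update w k (f (w k))) : ExteriorAlgebra ℝ V)
      = LinearMap.trace ℝ V f • (ιMulti ℝ N w : ExteriorAlgebra ℝ V) := by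
  classical
  let e : Module.Basis (Fin N) ℝ V := Module.finBasisOfFinrankEq ℝ V hN
  let L : MultilinearMap ℝ (fun _ : Fin N => V) (ExteriorAlgebra ℝ V) :=
    ∑ k : Fin N, (ιMulti ℝ N (M := V)).toMultilinearMap.compLinearMap
      (fun l => if l = k then f else LinearMap.id)
  have hL : ∀ v : Fin N → V,
      L v = ∑ k : Fin N, (ιMulti ℝ N (Function.update v k (f (v k))) : ExteriorAlgebra ℝ V) := by
    intro v
    simp only [L, MultilinearMap.sum_apply, MultilinearMap.compLinearMap_apply]
    refine Finset.sum_congr rfl fun k _ => ?_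
    have harg : (fun l => (if l = k then f else LinearMap.id) (v l)) = Function.update v k (f (v k)) := by
      funext l
      rcases eq_or_ne l k with rfl | h
      · simp
      · simp [h, Function.update_of_ne h]
    rw [harg]
    rfl
  have key : ∀ (v : Fin N → V) (i j : Fin N), i ≠ j → v i = v j → L v = 0 := by
    intro v i j hij hv
    rw [hL]
    have h1 : ∀ k : Fin N, k ≠ i → k ≠ j →
        (ιMulti ℝ N (Function.update v k (f (v k))) : ExteriorAlgebra ℝ V) = 0 := by
      intro k hki hkj
      refine AlternatingMap.map_eq_zero_of_eq _ _ ?_ hij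
      rw [Function.update_of_ne (Ne.symm hki), Function.update_of_ne (Ne.symm hkj), hv]
    have h2 : Function.update v i (f (v i))
        = (Function.update v j (f (v j))) ∘ (Equiv.swap i j) := by
      funext l
      simp only [Function.comp_apply]
      rcases eq_or_ne l i with rfl | hli
      · rw [Function.update_self, Equiv.swap_apply_left, Function.update_self, hv]
      · rcases eq_or_ne l j with rfl | hlj
        · rw [Function.update_of_ne (Ne.symm hij), Equiv.swap_apply_right,
            Function.update_of_ne hij, hv]
        · rw [Function.update_of_ne hli, Equiv.swap_apply_of_ne_of_ne hli hlj,
            Function.update_of_ne hlj]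
    have hsum : (Finset.univ : Finset (Fin N)) = insert i (insert j ((Finset.univ : Finset (Fin N)) \ {i, j})) := by
      rw [Finset.insert_eq, Finset.insert_eq, ← Finset.union_assoc, ← Finset.insert_eq]
      rw [Finset.union_sdiff_of_subset (Finset.subset_univ _)]
    rw [hsum, Finset.sum_insert, Finset.sum_insert]
    · rw [Finset.sum_eq_zero, add_zero]
      · rw [h2, AlternatingMap.map_swap _ _ hij]
        abel
      · intro k hk
        simp only [Finset.mem_sdiff, Finset.mem_insert, Finset.mem_singleton] at hk
        push_neg at hk
        exact h1 k hk.2.1 hk.2.2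
    · simp
    · simp [hij]
  let A : V [⋀^Fin N]→ₗ[ℝ] ExteriorAlgebra ℝ V :=
    { L with map_eq_zero_of_eq' := fun v i j hv hij => key v i j hij hv }
  have hA : ∀ v, A v = L v := fun _ => rfl
  have main : A = LinearMap.trace ℝ V f • (ιMulti ℝ N (M := V)) := by
    refine Module.Basis.ext_alternating e fun v hv => ?_
    have hvb : Function.Bijective v := (Finite.injective_iff_bijective).1 hv
    rw [hA, hL, AlternatingMap.smul_apply]
    have step : ∀ k : Fin N,
        (ιMulti ℝ N (Function.update (fun i => e (v i)) k (f (e (v k)))) : ExteriorAlgebra ℝ V)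
        = e.repr (f (e (v k))) (v k) • (ιMulti ℝ N (fun i => e (v i)) : ExteriorAlgebra ℝ V) := by
      intro k
      conv_lhs => rw [← Module.Basis.sum_repr e (f (e (v k)))]
      rw [AlternatingMap.map_update_sum]
      rw [Finset.sum_eq_single (v k)]
      · rw [AlternatingMap.map_update_smul]
        congr 2
        funext l
        rcases eq_or_ne l k with rfl | h
        · simp
        · simp [Function.update_of_ne h]
      · intro i _ hi
        rw [AlternatingMap.map_update_smul]
        obtain ⟨l, rfl⟩ := hvb.2 i
        have hlk : l ≠ k := fun h => hi (by rw [h])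
        have : (ιMulti ℝ N (Function.update (fun i => e (v i)) k (e (v l))) : ExteriorAlgebra ℝ V) = 0 := by
          refine AlternatingMap.map_eq_zero_of_eq _ _ (i := k) (j := l) ?_ (Ne.symm hlk)
          rw [Function.update_self, Function.update_of_ne hlk]
        rw [this, smul_zero]
      · intro h
        exact absurd (Finset.mem_univ _) h
    rw [Finset.sum_congr rfl (fun k _ => step k), ← Finset.sum_smul]
    congr 1
    rw [LinearMap.trace_eq_matrix_trace ℝ e f, Matrix.trace]
    refine Fintype.sum_bijective v hvb _ _ (fun k => ?_)
    simp [Matrix.diag, LinearMap.toMatrix_apply]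
  have := congrArg (fun (g : V [⋀^Fin N]→ₗ[ℝ] ExteriorAlgebra ℝ V) => g w) main
  simp only [AlternatingMap.smul_apply] at this
  rw [← hL w, ← hA w, this]
lemma trace_eq_zero_of_anticonj [FiniteDimensional ℝ V] (f : V →ₗ[ℝ] V) (C : V ≃ₗ[ℝ] V)
    (h : ∀ x, C (f x) = - f (C x)) : LinearMap.trace ℝ V f = 0 := by
  have h1 : C.conj f = -f := by
    ext x
    simp only [LinearEquiv.conj_apply, LinearMap.coe_comp, Function.comp_apply,
      LinearEquiv.coe_coe, LinearMap.neg_apply]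
    rw [h, C.apply_symm_apply]
  have h2 := LinearMap.trace_conj' f C
  rw [h1, map_neg] at h2
  linarith


end AltHelpers

section ComplexStructure
variable (W : Type*) [AddCommGroup W] [Module ℂ W]

/-- multiplication by I as a real-linear endomorphism -/
noncomputable def JW : W →ₗ[ℝ] W :=
  ((Complex.I : ℂ) • (LinearMap.id : W →ₗ[ℂ] W)).restrictScalars ℝ

lemma JW_apply (x : W) : JW W x = (Complex.I : ℂ) • x := rfl

noncomputable def Jd : (W →ₗ[ℝ] ℝ) →ₗ[ℝ] (W →ₗ[ℝ] ℝ) := (JW W).dualMap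

lemma Jd_apply (ψ : W →ₗ[ℝ] ℝ) (x : W) : Jd W ψ x = ψ ((Complex.I : ℂ) • x) := rfl

variable {n : ℕ} [FiniteDimensional ℂ W] (hdim : Module.finrank ℂ W = n)

noncomputable def CW (hdim : Module.finrank ℂ W = n) : W ≃ₗ[ℝ] W :=
  letI b : Module.Basis (Fin n) ℂ W := Module.finBasisOfFinrankEq ℂ W hdim
  ((b.equivFun.restrictScalars ℝ).trans
    (LinearEquiv.piCongrRight fun _ : Fin n => Complex.conjAe.toLinearEquiv)).trans
    (b.equivFun.restrictScalars ℝ).symm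

lemma CW_anticomm (x : W) : CW W hdim ((Complex.I : ℂ) • x) = -((Complex.I : ℂ) • CW W hdim x) := by
  set b : Module.Basis (Fin n) ℂ W := Module.finBasisOfFinrankEq ℂ W hdim with hb
  show (b.equivFun.restrictScalars ℝ).symm
      ((LinearEquiv.piCongrRight fun _ : Fin n => Complex.conjAe.toLinearEquiv)
        ((b.equivFun.restrictScalars ℝ) ((Complex.I : ℂ) • x)))
    = -((Complex.I : ℂ) • (b.equivFun.restrictScalars ℝ).symm
      ((LinearEquiv.piCongrRight fun _ : Fin n => Complex.conjAe.toLinearEquiv)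
        ((b.equivFun.restrictScalars ℝ) x)))
  have e1 : (b.equivFun.restrictScalars ℝ) ((Complex.I : ℂ) • x)
      = (Complex.I : ℂ) • (b.equivFun.restrictScalars ℝ) x := b.equivFun.map_smul _ _
  have e2 : (LinearEquiv.piCongrRight fun _ : Fin n => Complex.conjAe.toLinearEquiv)
        ((Complex.I : ℂ) • (b.equivFun.restrictScalars ℝ) x)
      = -((Complex.I : ℂ) • (LinearEquiv.piCongrRight fun _ : Fin n => Complex.conjAe.toLinearEquiv)
        ((b.equivFun.restrictScalars ℝ) x)) := by
    funext i
    simp [Complex.conjAe, Pi.smul_apply, smul_eq_mul]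
  rw [e1, e2, map_neg]
  congr 1
  exact (b.equivFun.symm.map_smul _ _)

noncomputable def Cd (hdim : Module.finrank ℂ W = n) : (W →ₗ[ℝ] ℝ) ≃ₗ[ℝ] (W →ₗ[ℝ] ℝ) :=
  (CW W hdim).dualMap

lemma Cd_anticomm (ψ : W →ₗ[ℝ] ℝ) : Cd W hdim (Jd W ψ) = - Jd W (Cd W hdim ψ) := by
  ext x
  show (Jd W ψ) (CW W hdim x) = -( (Cd W hdim ψ) ((Complex.I : ℂ) • x))
  rw [Jd_apply]
  show ψ ((Complex.I : ℂ) • CW W hdim x) = - ψ (CW W hdim ((Complex.I : ℂ) • x))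
  rw [CW_anticomm, map_neg, neg_neg]

lemma trace_Jd_zero (hdim : Module.finrank ℂ W = n) : LinearMap.trace ℝ (W →ₗ[ℝ] ℝ) (Jd W) = 0 :=
  trace_eq_zero_of_anticonj _ (Cd W hdim) (fun ψ => Cd_anticomm W hdim ψ)


end ComplexStructure

section AltMain
variable {V : Type*} [AddCommGroup V] [Module ℝ V]

lemma altS_recursion {N : ℕ} [FiniteDimensional ℝ V] (hN : Module.finrank ℝ V = N)
    (f : V →ₗ[ℝ] V) (htr : LinearMap.trace ℝ V f = 0)
    (a b : Fin N → V) (hfa : ∀ k, f (a k) = - b k) (hfb : ∀ k, f (b k) = a k)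
    (ε : Fin N → Bool) :
    ∑ k : Fin N, (if ε k = true then -altS N a b (Function.update ε k false)
                  else altS N a b (Function.update ε k true)) = 0 := by
  classical
  have step : ∀ (σ : Equiv.Perm (Fin N)) (k : Fin N),
      (if ε k = true
        then -(ιMulti ℝ N (fun l => if (Function.update ε k false) l = true then a (σ l) else b (σ l)) : ExteriorAlgebra ℝ V)
        else (ιMulti ℝ N (fun l => if (Function.update ε k true) l = true then a (σ l) else b (σ l)) : ExteriorAlgebra ℝ V))
      = (ιMulti ℝ N (Function.update (fun l => if ε l = true then a (σ l) else b (σ l)) k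
         (f (if ε k = true then a (σ k) else b (σ k)))) : ExteriorAlgebra ℝ V) := by
    intro σ k
    by_cases hk : ε k = true
    · rw [if_pos hk, if_pos hk, hfa, AlternatingMap.map_update_neg]
      have harg : (fun l => if (Function.update ε k false) l = true then a (σ l) else b (σ l))
          = Function.update (fun l => if ε l = true then a (σ l) else b (σ l)) k (b (σ k)) := by
        funext l
        rcases eq_or_ne l k with rfl | h
        · simp
        · rw [Function.update_of_ne h, Function.update_of_ne h]
      rw [harg]
    · rw [if_neg hk, if_neg hk, hfb]
      have harg : (fun l => if (Function.update ε k true) l = true then a (σ l) else b (σ l))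
          = Function.update (fun l => if ε l = true then a (σ l) else b (σ l)) k (a (σ k)) := by
        funext l
        rcases eq_or_ne l k with rfl | h
        · simp
        · rw [Function.update_of_ne h, Function.update_of_ne h]
      rw [harg]
  have main : ∀ k : Fin N, (if ε k = true then -altS N a b (Function.update ε k false)
      else altS N a b (Function.update ε k true))
      = ∑ σ : Equiv.Perm (Fin N), (Equiv.Perm.sign σ : ℤ) •
        (ιMulti ℝ N (Function.update (fun l => if ε l = true then a (σ l) else b (σ l)) k
          (f (if ε k = true then a (σ k) else b (σ k)))) : ExteriorAlgebra ℝ V) := by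
    intro k
    rw [← Finset.sum_congr rfl (fun σ _ => congrArg (fun z => (Equiv.Perm.sign σ : ℤ) • z) (step σ k))]
    by_cases hk : ε k = true
    · simp only [if_pos hk, smul_neg, Finset.sum_neg_distrib]
      rfl
    · simp only [if_neg hk]
      rfl
  rw [Finset.sum_congr rfl (fun k _ => main k), Finset.sum_comm]
  rw [Finset.sum_eq_zero]
  intro σ _
  have hw := sum_update_eq_trace_smul hN f (fun l => if ε l = true then a (σ l) else b (σ l))
  rw [← Finset.smul_sum]
  rw [hw, htr, zero_smul, smul_zero]
lemma card_filter_decide_lt (N s : ℕ) (hs : s ≤ N) :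
    (Finset.univ.filter (fun k : Fin N => decide ((k : ℕ) < s) = true)).card = s := by
  classical
  induction s with
  | zero => simp
  | succ s ih =>
    have hsN : s < N := lt_of_lt_of_le (Nat.lt_succ_self s) hs
    have hfil : (Finset.univ.filter (fun k : Fin N => decide ((k : ℕ) < s + 1) = true))
        = insert ⟨s, hsN⟩ (Finset.univ.filter (fun k : Fin N => decide ((k : ℕ) < s) = true)) := by
      ext k
      simp [Nat.lt_succ_iff_lt_or_eq, Fin.ext_iff, or_comm]
      exact Nat.le_iff_lt_or_eq.trans or_comm
    rw [hfil, Finset.card_insert_of_notMem (by simp), ih (le_of_lt hsN)]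

lemma filter_update_false {N : ℕ} (ε : Fin N → Bool) (k0 : Fin N) (hk0 : ε k0 = true) :
    (Finset.univ.filter (fun k => (Function.update ε k0 false) k = true)).card
    = (Finset.univ.filter (fun k => ε k = true)).card - 1 := by
  classical
  have h : (Finset.univ.filter (fun k => (Function.update ε k0 false) k = true))
      = (Finset.univ.filter (fun k => ε k = true)) \ {k0} := by
    ext k
    rcases eq_or_ne k k0 with rfl | h
    · simp
    · simp [Function.update_of_ne h, h]
  rw [h, Finset.card_sdiff_of_subset (by simp [hk0]), Finset.card_singleton]

lemma filter_update_true {N : ℕ} (ε : Fin N → Bool) (k0 : Fin N) (hk0 : ¬ ε k0 = true) :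
    (Finset.univ.filter (fun k => (Function.update ε k0 true) k = true)).card
    = (Finset.univ.filter (fun k => ε k = true)).card + 1 := by
  classical
  have h : (Finset.univ.filter (fun k => (Function.update ε k0 true) k = true))
      = insert k0 (Finset.univ.filter (fun k => ε k = true)) := by
    ext k
    rcases eq_or_ne k k0 with rfl | h
    · simp
    · simp [Function.update_of_ne h, h]
  rw [h, Finset.card_insert_of_notMem (by simp [hk0])]

lemma recursion_eval {N : ℕ} [FiniteDimensional ℝ V] (hN : Module.finrank ℝ V = N)
    (f : V →ₗ[ℝ] V) (htr : LinearMap.trace ℝ V f = 0)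
    (a b : Fin N → V) (hfa : ∀ k, f (a k) = - b k) (hfb : ∀ k, f (b k) = a k)
    (p : ℕ) (hp1 : p + 1 ≤ N) :
    p • altS N a b (fun k : Fin N => decide ((k : ℕ) < p - 1))
      = (N - p) • altS N a b (fun k : Fin N => decide ((k : ℕ) < p + 1)) := by
  classical
  set ε : Fin N → Bool := fun k : Fin N => decide ((k : ℕ) < p) with hε
  have hrec := altS_recursion hN f htr a b hfa hfb ε
  rw [Finset.sum_ite] at hrec
  have hcard : (Finset.univ.filter (fun k => ε k = true)).card = p :=
    card_filter_decide_lt N p (le_trans (Nat.le_succ p) hp1)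
  have e1 : ∀ k ∈ Finset.univ.filter (fun k => ε k = true),
      -altS N a b (Function.update ε k false)
        = -altS N a b (fun k : Fin N => decide ((k : ℕ) < p - 1)) := by
    intro k hk
    simp only [Finset.mem_filter] at hk
    congr 1
    refine altS_congr_card N a b _ _ ?_
    rw [filter_update_false ε k hk.2, hcard,
      card_filter_decide_lt N (p - 1) (le_trans (Nat.sub_le p 1) (le_trans (Nat.le_succ p) hp1))]
  have e2 : ∀ k ∈ Finset.univ.filter (fun k => ¬ ε k = true),
      altS N a b (Function.update ε k true)
        = altS N a b (fun k : Fin N => decide ((k : ℕ) < p + 1)) := by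
    intro k hk
    simp only [Finset.mem_filter] at hk
    refine altS_congr_card N a b _ _ ?_
    rw [filter_update_true ε k hk.2, hcard, card_filter_decide_lt N (p + 1) hp1]
  rw [Finset.sum_congr rfl e1, Finset.sum_congr rfl e2, Finset.sum_const, Finset.sum_const] at hrec
  have hcard2 : (Finset.univ.filter (fun k => ¬ ε k = true)).card = N - p := by
    have := Finset.card_filter_add_card_filter_not
      (s := (Finset.univ : Finset (Fin N))) (p := fun k => ε k = true)
    rw [Finset.card_univ, Fintype.card_fin, hcard] at this
    omega
  rw [hcard, hcard2, smul_neg] at hrec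
  exact neg_add_eq_zero.mp hrec
lemma nsmul_zero_cancel {c : ℕ} (hc : c ≠ 0) {x : ExteriorAlgebra ℝ V} (h : c • x = 0) : x = 0 := by
  rw [← Nat.cast_smul_eq_nsmul ℝ] at h
  rcases smul_eq_zero.mp h with h' | h'
  · exact absurd (Nat.cast_eq_zero.mp h') hc
  · exact h'

lemma altS_std_odd_zero {N : ℕ} [FiniteDimensional ℝ V] (hN : Module.finrank ℝ V = N)
    (f : V →ₗ[ℝ] V) (htr : LinearMap.trace ℝ V f = 0)
    (a b : Fin N → V) (hfa : ∀ k, f (a k) = - b k) (hfb : ∀ k, f (b k) = a k)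
    (m : ℕ) (hm : 2*m+1 ≤ N) :
    altS N a b (fun k : Fin N => decide ((k : ℕ) < 2*m+1)) = 0 := by
  induction m with
  | zero =>
    have h := recursion_eval hN f htr a b hfa hfb 0 (by omega)
    rw [zero_smul] at h
    have e0 : (2*0+1 : ℕ) = 0+1 := by norm_num
    rw [e0]
    exact nsmul_zero_cancel (c := N - 0) (by omega) h.symm
  | succ m ih =>
    have h := recursion_eval hN f htr a b hfa hfb (2*m+2) (by omega)
    have e1 : 2*m+2-1 = 2*m+1 := by omega
    rw [e1, ih (by omega), smul_zero] at h
    have e2 : 2*(m+1)+1 = 2*m+2+1 := by ring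
    rw [e2]
    exact nsmul_zero_cancel (c := N - (2*m+2)) (by omega) h.symm

end AltMain

lemma mem_take_finRange {N p : ℕ} (x : Fin N) (hx : x ∈ (List.finRange N).take p) :
    (x : ℕ) < p := by
  obtain ⟨i, hi, hix⟩ := List.mem_iff_getElem.mp hx
  have hi' : i < p := by
    simpa using lt_of_lt_of_le hi (by simp [List.length_take])
  rw [List.getElem_take] at hix
  simp only [List.getElem_finRange] at hix
  rw [← hix]
  simpa using hi'

lemma mem_drop_finRange {N p : ℕ} (x : Fin N) (hx : x ∈ (List.finRange N).drop p) :
    ¬ ((x : ℕ) < p) := by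
  obtain ⟨i, hi, hix⟩ := List.mem_iff_getElem.mp hx
  rw [List.getElem_drop] at hix
  simp only [List.getElem_finRange] at hix
  rw [← hix]
  simp

set_option synthInstance.maxHeartbeats 1000000 in
set_option maxHeartbeats 1000000 in
/-- Let `W` be an `n`-dimensional complex vector space (`n ≥ 1`), regarded
as a real vector space, and let `φ_1,…,φ_{2n} : W → ℂ` be `ℂ`-linear functionals. With
`a_k := Re∘φ_k` and `b_k := Im∘φ_k` (`ℝ`-linear functionals on `W`), for every
`0 ≤ j ≤ n−1` one has
`Alt_{2n} [ a_1∧…∧a_{2j+1} ∧ b_{2j+2}∧…∧b_{2n} ] = 0`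
in `Λ^{2n}_ℝ(W*_ℝ)` (realized inside the exterior algebra of the real dual of `W`),
where `Alt_{2n}` permutes the functionals `φ_1,…,φ_{2n}`. -/
theorem stmt_4 (W : Type*) [AddCommGroup W] [Module ℂ W] (n : ℕ) (hn : 1 ≤ n)
    [FiniteDimensional ℂ W] (hdim : Module.finrank ℂ W = n)
    (φ : Fin (2 * n) → W →ₗ[ℂ] ℂ) (j : ℕ) (hj : j ≤ n - 1) :
    ∑ σ : Equiv.Perm (Fin (2 * n)), (Equiv.Perm.sign σ : ℤ) •
      ((((List.finRange (2 * n)).take (2 * j + 1)).map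
          (fun k => ι ℝ (Complex.reLm.comp ((φ (σ k)).restrictScalars ℝ)))).prod *
       (((List.finRange (2 * n)).drop (2 * j + 1)).map
          (fun k => ι ℝ (Complex.imLm.comp ((φ (σ k)).restrictScalars ℝ)))).prod)
    = 0 := by
  classical
  set a : Fin (2 * n) → (W →ₗ[ℝ] ℝ) := fun k => Complex.reLm.comp ((φ k).restrictScalars ℝ) with ha
  set b : Fin (2 * n) → (W →ₗ[ℝ] ℝ) := fun k => Complex.imLm.comp ((φ k).restrictScalars ℝ) with hb
  have hNV : Module.finrank ℝ (W →ₗ[ℝ] ℝ) = 2 * n := by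
    have h1 : Module.finrank ℝ W = 2 * n := by
      rw [← Module.finrank_mul_finrank ℝ ℂ W, Complex.finrank_real_complex, hdim]
    rw [Subspace.dual_finrank_eq (K := ℝ) (V := W), h1]
  have hfa : ∀ k, Jd W (a k) = - b k := by
    intro k
    ext x
    rw [Jd_apply]
    simp only [ha, hb, LinearMap.coe_comp, Function.comp_apply, LinearMap.neg_apply,
      LinearMap.restrictScalars_apply, Complex.reLm_coe, Complex.imLm_coe]
    rw [map_smul, smul_eq_mul, Complex.mul_re, Complex.I_re, Complex.I_im]
    ring
  have hfb : ∀ k, Jd W (b k) = a k := by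
    intro k
    ext x
    rw [Jd_apply]
    simp only [ha, hb, LinearMap.coe_comp, Function.comp_apply,
      LinearMap.restrictScalars_apply, Complex.reLm_coe, Complex.imLm_coe]
    rw [map_smul, smul_eq_mul, Complex.mul_im, Complex.I_re, Complex.I_im]
    ring
  have hprod : ∀ σ : Equiv.Perm (Fin (2 * n)),
      ((((List.finRange (2 * n)).take (2 * j + 1)).map (fun k => ι ℝ (a (σ k)))).prod *
       (((List.finRange (2 * n)).drop (2 * j + 1)).map (fun k => ι ℝ (b (σ k)))).prod)
      = (ιMulti ℝ (2 * n) (fun k => if (decide ((k : ℕ) < 2 * j + 1)) = true then a (σ k) else b (σ k))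
          : ExteriorAlgebra ℝ (W →ₗ[ℝ] ℝ)) := by
    intro σ
    rw [ιMulti_apply, List.ofFn_eq_map]
    conv_rhs => rw [← List.take_append_drop (2 * j + 1) (List.finRange (2 * n))]
    rw [List.map_append, List.prod_append]
    congr 1
    · refine congrArg List.prod (List.map_congr_left fun x hx => ?_)
      rw [if_pos (by simpa using mem_take_finRange x hx)]
    · refine congrArg List.prod (List.map_congr_left fun x hx => ?_)
      rw [if_neg (by simpa using mem_drop_finRange x hx)]
  have hgoal : (∑ σ : Equiv.Perm (Fin (2 * n)), (Equiv.Perm.sign σ : ℤ) •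
      ((((List.finRange (2 * n)).take (2 * j + 1)).map (fun k => ι ℝ (a (σ k)))).prod *
       (((List.finRange (2 * n)).drop (2 * j + 1)).map (fun k => ι ℝ (b (σ k)))).prod))
      = altS (2 * n) a b (fun k : Fin (2 * n) => decide ((k : ℕ) < 2 * j + 1)) := by
    unfold altS
    exact Finset.sum_congr rfl fun σ _ => congrArg _ (hprod σ)
  rw [hgoal]
  exact altS_std_odd_zero hNV (Jd W) (trace_Jd_zero W hdim) a b hfa hfb j (by omega)
end

section
/- Let W be an n-dimensional complex vector space (n ≥ 1), regarded also as a 2n-dimensional real vector space, and let φ_1,…,φ_{2n} : W → ℂ be ℂ-linear functionals. Set a_k := Re∘φ_k and b_k := Im∘φ_k. Then for every 0 ≤ j ≤ n, Alt_{2n} [ a_1∧…∧a_{2j} ∧ b_{2j+1}∧…∧b_{2n} ] = ( (2n)! · C(n,j) / C(2n,2j) ) · a_1∧a_2∧…∧a_{2n} in Λ^{2n}_ℝ(W*_ℝ), where Alt_{2n} acts by simultaneously permuting the pairs (a_k, b_k). (This is the pointwise content of Lemma 6.1(II), with b_{j,n} = (2n)!·C(n,j)/C(2n,2j).) -/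
open ExteriorAlgebra

set_option synthInstance.maxHeartbeats 1000000
set_option maxHeartbeats 1000000

noncomputable section AuxStmt5SEC
open scoped Classical


/-- sign of a self-map of `Fin m`: the permutation sign if bijective, else 0. -/
def psgn5 {m : ℕ} (f : Fin m → Fin m) : ℤ :=
  if h : Function.Bijective f then Equiv.Perm.sign (Equiv.ofBijective f h) else 0

lemma psgn5_coe {m : ℕ} (σ : Equiv.Perm (Fin m)) : psgn5 ⇑σ = Equiv.Perm.sign σ := by
  rw [psgn5, dif_pos σ.bijective]
  have : Equiv.ofBijective ⇑σ σ.bijective = σ := Equiv.ext fun x => rfl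
  rw [this]

lemma psgn5_not_bij {m : ℕ} (f : Fin m → Fin m) (h : ¬ Function.Bijective f) : psgn5 f = 0 := by
  rw [psgn5, dif_neg h]

lemma altmap_comp_fun {M N : Type*} [AddCommGroup M] [Module ℝ M] [AddCommGroup N] [Module ℝ N]
    {m : ℕ} (g : M [⋀^Fin m]→ₗ[ℝ] N) (v : Fin m → M) (f : Fin m → Fin m) :
    g (v ∘ f) = psgn5 f • g v := by
  by_cases h : Function.Bijective f
  · rw [psgn5, dif_pos h]
    have h1 : v ∘ f = v ∘ ⇑(Equiv.ofBijective f h) := rfl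
    rw [h1, g.map_perm, Units.smul_def]
  · rw [psgn5_not_bij f h, zero_smul]
    have hni : ¬ Function.Injective f := fun hi => h ((Finite.injective_iff_bijective).mp hi)
    obtain ⟨i, k, heq, hne⟩ := Function.not_injective_iff.mp hni
    exact g.map_eq_zero_of_eq (v ∘ f) (by simp [Function.comp, heq]) hne

/-- the permutation of `Fin n ⊕ Fin n` swapping `inl m ↔ inr m` for `m ∈ B`. -/
def swapSum5 {n : ℕ} (B : Finset (Fin n)) : Equiv.Perm (Fin n ⊕ Fin n) :=
  Function.Involutive.toPerm
    (Sum.elim (fun m => if m ∈ B then Sum.inr m else Sum.inl m)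
      (fun m => if m ∈ B then Sum.inl m else Sum.inr m))
    (by rintro (m | m) <;> by_cases h : m ∈ B <;> simp [h])

@[simp] lemma swapSum5_inl {n : ℕ} (B : Finset (Fin n)) (m : Fin n) :
    swapSum5 B (Sum.inl m) = if m ∈ B then Sum.inr m else Sum.inl m := rfl

@[simp] lemma swapSum5_inr {n : ℕ} (B : Finset (Fin n)) (m : Fin n) :
    swapSum5 B (Sum.inr m) = if m ∈ B then Sum.inl m else Sum.inr m := rfl

lemma swapSum5_sign {n : ℕ} (B : Finset (Fin n)) :
    Equiv.Perm.sign (swapSum5 B) = (-1) ^ B.card := by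
  classical
  induction B using Finset.induction_on with
  | empty =>
    have : swapSum5 (∅ : Finset (Fin n)) = 1 := by
      ext z
      rcases z with m | m <;> simp
    simp [this]
  | @insert b B hb ih =>
    have hdec : swapSum5 (insert b B) = Equiv.swap (Sum.inl b) (Sum.inr b) * swapSum5 B := by
      ext z
      rcases z with m | m <;> rw [Equiv.Perm.mul_apply] <;>
        rcases eq_or_ne m b with rfl | hmb
      · simp [hb, Equiv.swap_apply_left]
      · by_cases hm : m ∈ B
        · simp [hm, hmb, Equiv.swap_apply_of_ne_of_ne, Sum.inl_injective.ne hmb]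
        · simp [hm, hmb, Equiv.swap_apply_of_ne_of_ne, Sum.inl_injective.ne hmb]
      · simp [hb, Equiv.swap_apply_right]
      · by_cases hm : m ∈ B
        · simp [hm, hmb, Equiv.swap_apply_of_ne_of_ne, Sum.inr_injective.ne hmb]
        · simp [hm, hmb, Equiv.swap_apply_of_ne_of_ne, Sum.inr_injective.ne hmb]
    rw [hdec, Equiv.Perm.sign_mul, Equiv.Perm.sign_swap (by simp), ih,
      Finset.card_insert_of_notMem hb, pow_succ, mul_comm]


variable {n : ℕ} (j : ℕ) (q : (Fin n ⊕ Fin n) ≃ Fin (2 * n))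

def tau5 (σ : Equiv.Perm (Fin (2 * n))) : Fin (2 * n) → Fin (2 * n) :=
  fun k => if (k : ℕ) < 2 * j then σ k else q ((q.symm (σ k)).swap)

def Aof5 (σ : Equiv.Perm (Fin (2 * n))) : Finset (Fin n) :=
  Finset.univ.filter (fun p => ∃ k : Fin (2 * n), (k : ℕ) < 2 * j ∧ σ k = q (Sum.inl p))

lemma mem_Aof5 {σ : Equiv.Perm (Fin (2 * n))} {p : Fin n} :
    p ∈ Aof5 j q σ ↔ ∃ k : Fin (2 * n), (k : ℕ) < 2 * j ∧ σ k = q (Sum.inl p) := by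
  simp [Aof5]

def SS5 (A : Finset (Fin n)) : Finset (Fin (2 * n)) :=
  A.image (fun p => q (Sum.inl p)) ∪ A.image (fun p => q (Sum.inr p))

lemma inl_mem_SS5 {A : Finset (Fin n)} {p : Fin n} :
    q (Sum.inl p) ∈ SS5 q A ↔ p ∈ A := by
  simp [SS5, q.injective.eq_iff]

lemma inr_mem_SS5 {A : Finset (Fin n)} {p : Fin n} :
    q (Sum.inr p) ∈ SS5 q A ↔ p ∈ A := by
  simp [SS5, q.injective.eq_iff]

lemma mem_SS5 {A : Finset (Fin n)} {v : Fin (2 * n)} :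
    v ∈ SS5 q A ↔ (∃ p ∈ A, v = q (Sum.inl p)) ∨ ∃ p ∈ A, v = q (Sum.inr p) := by
  simp [SS5, eq_comm]

lemma card_SS5 (A : Finset (Fin n)) : (SS5 q A).card = 2 * A.card := by
  have h1 : Function.Injective (fun p : Fin n => q (Sum.inl p)) :=
    fun a b h => Sum.inl_injective (q.injective h)
  have h2 : Function.Injective (fun p : Fin n => q (Sum.inr p)) :=
    fun a b h => Sum.inr_injective (q.injective h)
  rw [SS5, Finset.card_union_of_disjoint, Finset.card_image_of_injective _ h1,
    Finset.card_image_of_injective _ h2]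
  · omega
  · rw [Finset.disjoint_left]
    rintro v hv hv'
    simp only [Finset.mem_image] at hv hv'
    obtain ⟨p, _, rfl⟩ := hv
    obtain ⟨p', _, he⟩ := hv'
    exact absurd (q.injective he) (by simp)

lemma card_lt_filter5 (N t : ℕ) (h : t ≤ N) :
    (Finset.univ.filter (fun k : Fin N => (k : ℕ) < t)).card = t := by
  apply Finset.card_eq_of_bijective (fun i hi => (⟨i, lt_of_lt_of_le hi h⟩ : Fin N))
  · intro a ha
    simp only [Finset.mem_filter] at ha
    exact ⟨a, ha.2, by simp⟩
  · intro i hi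
    simp [hi]
  · intro i k hi hk hik
    simpa using hik

section claims
variable {j : ℕ} {q : (Fin n ⊕ Fin n) ≃ Fin (2 * n)} {σ : Equiv.Perm (Fin (2 * n))}

lemma claim1_5 (hinj : Function.Injective (tau5 j q σ)) (p : Fin n) :
    (∃ k : Fin (2 * n), (k : ℕ) < 2 * j ∧ σ k = q (Sum.inl p)) ↔
    (∃ k : Fin (2 * n), (k : ℕ) < 2 * j ∧ σ k = q (Sum.inr p)) := by
  constructor
  · rintro ⟨k, hk, he⟩
    obtain ⟨k', he'⟩ := σ.surjective (q (Sum.inr p))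
    refine ⟨k', ?_, he'⟩
    by_contra hk'
    have h1 : tau5 j q σ k' = q (Sum.inl p) := by
      simp [tau5, hk', he']
    have h2 : tau5 j q σ k = q (Sum.inl p) := by
      simp [tau5, hk, he]
    have := hinj (h1.trans h2.symm)
    exact hk' (this ▸ hk)
  · rintro ⟨k, hk, he⟩
    obtain ⟨k', he'⟩ := σ.surjective (q (Sum.inl p))
    refine ⟨k', ?_, he'⟩
    by_contra hk'
    have h1 : tau5 j q σ k' = q (Sum.inr p) := by
      simp [tau5, hk', he']
    have h2 : tau5 j q σ k = q (Sum.inr p) := by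
      simp [tau5, hk, he]
    have := hinj (h1.trans h2.symm)
    exact hk' (this ▸ hk)

lemma claim2_5 (hinj : Function.Injective (tau5 j q σ)) (k : Fin (2 * n))
    (hk : (k : ℕ) < 2 * j) : σ k ∈ SS5 q (Aof5 j q σ) := by
  rcases h : q.symm (σ k) with p | p
  · have he : σ k = q (Sum.inl p) := by rw [← h, Equiv.apply_symm_apply]
    rw [he, inl_mem_SS5, mem_Aof5]
    exact ⟨k, hk, he⟩
  · have he : σ k = q (Sum.inr p) := by rw [← h, Equiv.apply_symm_apply]
    rw [he, inr_mem_SS5, mem_Aof5]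
    exact (claim1_5 hinj p).mpr ⟨k, hk, he⟩

lemma claim3_5 (hinj : Function.Injective (tau5 j q σ)) (k : Fin (2 * n))
    (hk : ¬ (k : ℕ) < 2 * j) : σ k ∉ SS5 q (Aof5 j q σ) := by
  intro hmem
  rw [mem_SS5] at hmem
  rcases hmem with ⟨p, hp, he⟩ | ⟨p, hp, he⟩
  · rw [mem_Aof5] at hp
    obtain ⟨k', hk', he'⟩ := hp
    have : σ k' = σ k := he'.trans he.symm
    exact hk ((σ.injective this) ▸ hk')
  · rw [mem_Aof5] at hp
    obtain ⟨k', hk', he'⟩ := hp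
    have h1 : tau5 j q σ k = q (Sum.inl p) := by
      simp [tau5, hk, he]
    have h2 : tau5 j q σ k' = q (Sum.inl p) := by
      simp [tau5, hk', he']
    have := hinj (h1.trans h2.symm)
    exact hk (this ▸ hk')

lemma SS_eq_image5 (hinj : Function.Injective (tau5 j q σ)) :
    SS5 q (Aof5 j q σ) =
      (Finset.univ.filter (fun k : Fin (2 * n) => (k : ℕ) < 2 * j)).image σ := by
  ext v
  simp only [Finset.mem_image, Finset.mem_filter, Finset.mem_univ, true_and]
  constructor
  · intro hv
    rw [mem_SS5] at hv
    rcases hv with ⟨p, hp, rfl⟩ | ⟨p, hp, rfl⟩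
    · obtain ⟨k, hk, he⟩ := (mem_Aof5 j q).mp hp
      exact ⟨k, hk, he⟩
    · obtain ⟨k, hk, he⟩ := (claim1_5 hinj p).mp ((mem_Aof5 j q).mp hp)
      exact ⟨k, hk, he⟩
  · rintro ⟨k, hk, rfl⟩
    exact claim2_5 hinj k hk

lemma cardA_5 (hj : 2 * j ≤ 2 * n) (hinj : Function.Injective (tau5 j q σ)) :
    (Aof5 j q σ).card = j := by
  have h1 : 2 * (Aof5 j q σ).card = 2 * j := by
    rw [← card_SS5, SS_eq_image5 hinj,
      Finset.card_image_of_injective _ σ.injective, card_lt_filter5 _ _ hj]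
  omega

end claims

section claims2
variable {j : ℕ} {q : (Fin n ⊕ Fin n) ≃ Fin (2 * n)} {σ : Equiv.Perm (Fin (2 * n))}

lemma tau_decomp5 (hinj : Function.Injective (tau5 j q σ)) :
    tau5 j q σ = ⇑(q.permCongr (swapSum5 (Aof5 j q σ)ᶜ) * σ) := by
  funext k
  rw [Equiv.Perm.coe_mul, Function.comp_apply, Equiv.permCongr_apply]
  by_cases hk : (k : ℕ) < 2 * j
  · have hmem := claim2_5 hinj k hk
    rcases h : q.symm (σ k) with p | p
    · have he : σ k = q (Sum.inl p) := by rw [← h, Equiv.apply_symm_apply]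
      have hp : p ∈ Aof5 j q σ := (inl_mem_SS5 q).mp (he ▸ hmem)
      simp [tau5, hk, h, Finset.mem_compl, hp, he]
    · have he : σ k = q (Sum.inr p) := by rw [← h, Equiv.apply_symm_apply]
      have hp : p ∈ Aof5 j q σ := (inr_mem_SS5 q).mp (he ▸ hmem)
      simp [tau5, hk, h, Finset.mem_compl, hp, he]
  · have hmem := claim3_5 hinj k hk
    rcases h : q.symm (σ k) with p | p
    · have he : σ k = q (Sum.inl p) := by rw [← h, Equiv.apply_symm_apply]
      have hp : p ∉ Aof5 j q σ := fun hp => hmem (he ▸ (inl_mem_SS5 q).mpr hp)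
      simp [tau5, hk, h, Finset.mem_compl, hp]
    · have he : σ k = q (Sum.inr p) := by rw [← h, Equiv.apply_symm_apply]
      have hp : p ∉ Aof5 j q σ := fun hp => hmem (he ▸ (inr_mem_SS5 q).mpr hp)
      simp [tau5, hk, h, Finset.mem_compl, hp]

lemma card_cond5 (hinj : Function.Injective (tau5 j q σ)) :
    (Finset.univ.filter
      (fun k : Fin (2 * n) => (k : ℕ) < 2 * j ∧ (q.symm (σ k)).isRight)).card
    = (Aof5 j q σ).card := by
  apply Finset.card_bij' (fun k _ => Sum.elim id id (q.symm (σ k)))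
    (fun p _ => σ.symm (q (Sum.inr p)))
  · intro k hk
    simp only [Finset.mem_filter, Finset.mem_univ, true_and] at hk
    rcases h : q.symm (σ k) with p | p
    · rw [h] at hk
      simp at hk
    · have he : σ k = q (Sum.inr p) := by rw [← h, Equiv.apply_symm_apply]
      simp only [Sum.elim_inr, id_eq]
      exact (mem_Aof5 j q).mpr ((claim1_5 hinj p).mpr ⟨k, hk.1, he⟩)
  · intro p hp
    obtain ⟨k, hk, he⟩ := (claim1_5 hinj p).mp ((mem_Aof5 j q).mp hp)
    have : σ.symm (q (Sum.inr p)) = k := by rw [← he, Equiv.symm_apply_apply]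
    rw [this]
    simp only [Finset.mem_filter, Finset.mem_univ, true_and]
    exact ⟨hk, by rw [he]; simp⟩
  · intro k hk
    simp only [Finset.mem_filter, Finset.mem_univ, true_and] at hk
    rcases h : q.symm (σ k) with p | p
    · rw [h] at hk; simp at hk
    · have he : σ k = q (Sum.inr p) := by rw [← h, Equiv.apply_symm_apply]
      simp only [Sum.elim_inr, id_eq, ← he, Equiv.symm_apply_apply]
  · intro p hp
    simp

lemma value5 (hj : j ≤ n) (hinj : Function.Injective (tau5 j q σ)) :
    (Equiv.Perm.sign σ : ℤ) *
      (∏ k : Fin (2 * n), if (k : ℕ) < 2 * j ∧ (q.symm (σ k)).isRight then (-1 : ℤ) else 1) *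
      psgn5 (tau5 j q σ) = (-1) ^ n := by
  have hA : (Aof5 j q σ).card = j := cardA_5 (by omega) hinj
  have hprod : (∏ k : Fin (2 * n),
      if (k : ℕ) < 2 * j ∧ (q.symm (σ k)).isRight then (-1 : ℤ) else 1) = (-1) ^ j := by
    rw [Finset.prod_ite, Finset.prod_const, Finset.prod_const_one, mul_one,
      card_cond5 hinj, hA]
  have hpsgn : psgn5 (tau5 j q σ) = (-1) ^ (n - j) * (Equiv.Perm.sign σ : ℤ) := by
    rw [tau_decomp5 hinj, psgn5_coe, Equiv.Perm.sign_mul, Equiv.Perm.sign_permCongr,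
      swapSum5_sign, Finset.card_compl, hA, Fintype.card_fin]
    push_cast
    ring
  rw [hprod, hpsgn]
  have hss : (Equiv.Perm.sign σ : ℤ) * (Equiv.Perm.sign σ : ℤ) = 1 := by
    rw [← Units.val_mul, Int.units_mul_self, Units.val_one]
  have : (Equiv.Perm.sign σ : ℤ) * (-1) ^ j * ((-1) ^ (n - j) * (Equiv.Perm.sign σ : ℤ))
      = ((Equiv.Perm.sign σ : ℤ) * (Equiv.Perm.sign σ : ℤ)) * ((-1) ^ j * (-1) ^ (n - j)) := by
    ring
  rw [this, hss, one_mul, ← pow_add]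
  congr 1
  omega

end claims2

section param
variable (n j : ℕ)

def E05 (hj : j ≤ n) : Fin (2 * n) ≃ Fin (2 * j) ⊕ Fin (2 * n - 2 * j) :=
  (finCongr (by omega : 2 * n = 2 * j + (2 * n - 2 * j))).trans finSumFinEquiv.symm

lemma E05_symm_inl (hj : j ≤ n) (a : Fin (2 * j)) :
    (((E05 n j hj).symm (Sum.inl a) : Fin (2 * n)) : ℕ) = a := by
  simp [E05]

lemma E05_symm_inr (hj : j ≤ n) (b : Fin (2 * n - 2 * j)) :
    (((E05 n j hj).symm (Sum.inr b) : Fin (2 * n)) : ℕ) = 2 * j + b := by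
  simp [E05]

variable (q : (Fin n ⊕ Fin n) ≃ Fin (2 * n))

def eS5 (A : Finset (Fin n)) (hA : A.card = j) : Fin (2 * j) ≃ {x // x ∈ SS5 q A} :=
  ((SS5 q A).orderIsoOfFin (by rw [card_SS5, hA])).toEquiv

def eC5 (hj : j ≤ n) (A : Finset (Fin n)) (hA : A.card = j) :
    Fin (2 * n - 2 * j) ≃ {x // ¬ x ∈ SS5 q A} :=
  (((SS5 q A)ᶜ.orderIsoOfFin
    (by rw [Finset.card_compl, card_SS5, hA, Fintype.card_fin])).toEquiv).trans
    (Equiv.subtypeEquivRight (fun x => Finset.mem_compl))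

def Phi5 (hj : j ≤ n) (A : Finset (Fin n)) (hA : A.card = j)
    (π : Equiv.Perm (Fin (2 * j))) (π' : Equiv.Perm (Fin (2 * n - 2 * j))) :
    Equiv.Perm (Fin (2 * n)) :=
  (E05 n j hj).trans ((Equiv.sumCongr π π').trans
    ((Equiv.sumCongr (eS5 n j q A hA) (eC5 n j q hj A hA)).trans
      (Equiv.sumCompl (· ∈ SS5 q A))))

variable {n j q}

lemma Phi5_inl (hj : j ≤ n) (A : Finset (Fin n)) (hA : A.card = j)
    (π : Equiv.Perm (Fin (2 * j))) (π' : Equiv.Perm (Fin (2 * n - 2 * j))) (a : Fin (2 * j)) :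
    Phi5 n j q hj A hA π π' ((E05 n j hj).symm (Sum.inl a))
      = (eS5 n j q A hA (π a) : Fin (2 * n)) := by
  simp [Phi5, Equiv.sumCongr_apply]

lemma Phi5_inr (hj : j ≤ n) (A : Finset (Fin n)) (hA : A.card = j)
    (π : Equiv.Perm (Fin (2 * j))) (π' : Equiv.Perm (Fin (2 * n - 2 * j)))
    (b : Fin (2 * n - 2 * j)) :
    Phi5 n j q hj A hA π π' ((E05 n j hj).symm (Sum.inr b))
      = ((eC5 n j q hj A hA (π' b) : {x // ¬ x ∈ SS5 q A}) : Fin (2 * n)) := by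
  simp [Phi5, Equiv.sumCongr_apply]

lemma E05_cases (hj : j ≤ n) (k : Fin (2 * n)) (hk : (k : ℕ) < 2 * j) :
    ∃ a : Fin (2 * j), (E05 n j hj).symm (Sum.inl a) = k := by
  rcases h : E05 n j hj k with a | b
  · exact ⟨a, by rw [← h, Equiv.symm_apply_apply]⟩
  · exfalso
    have h1 : (E05 n j hj).symm (Sum.inr b) = k := by rw [← h, Equiv.symm_apply_apply]
    have := E05_symm_inr n j hj b
    rw [h1] at this
    omega

lemma E05_cases' (hj : j ≤ n) (k : Fin (2 * n)) (hk : ¬ (k : ℕ) < 2 * j) :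
    ∃ b : Fin (2 * n - 2 * j), (E05 n j hj).symm (Sum.inr b) = k := by
  rcases h : E05 n j hj k with a | b
  · exfalso
    have h1 : (E05 n j hj).symm (Sum.inl a) = k := by rw [← h, Equiv.symm_apply_apply]
    have := E05_symm_inl n j hj a
    rw [h1] at this
    omega
  · exact ⟨b, by rw [← h, Equiv.symm_apply_apply]⟩

lemma Phi5_mem (hj : j ≤ n) (A : Finset (Fin n)) (hA : A.card = j)
    (π : Equiv.Perm (Fin (2 * j))) (π' : Equiv.Perm (Fin (2 * n - 2 * j))) (k : Fin (2 * n))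
    (hk : (k : ℕ) < 2 * j) : Phi5 n j q hj A hA π π' k ∈ SS5 q A := by
  obtain ⟨a, ha⟩ := E05_cases hj k hk
  rw [← ha, Phi5_inl]
  exact (eS5 n j q A hA (π a)).2

lemma Phi5_not_mem (hj : j ≤ n) (A : Finset (Fin n)) (hA : A.card = j)
    (π : Equiv.Perm (Fin (2 * j))) (π' : Equiv.Perm (Fin (2 * n - 2 * j))) (k : Fin (2 * n))
    (hk : ¬ (k : ℕ) < 2 * j) : Phi5 n j q hj A hA π π' k ∉ SS5 q A := by
  obtain ⟨b, hb⟩ := E05_cases' hj k hk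
  rw [← hb, Phi5_inr]
  exact (eC5 n j q hj A hA (π' b)).2

lemma tau_decomp_gen (A : Finset (Fin n)) (σ : Equiv.Perm (Fin (2 * n)))
    (h2 : ∀ k : Fin (2 * n), (k : ℕ) < 2 * j → σ k ∈ SS5 q A)
    (h3 : ∀ k : Fin (2 * n), ¬ (k : ℕ) < 2 * j → σ k ∉ SS5 q A) :
    tau5 j q σ = ⇑(q.permCongr (swapSum5 Aᶜ) * σ) := by
  funext k
  rw [Equiv.Perm.coe_mul, Function.comp_apply, Equiv.permCongr_apply]
  by_cases hk : (k : ℕ) < 2 * j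
  · have hmem := h2 k hk
    rcases h : q.symm (σ k) with p | p
    · have he : σ k = q (Sum.inl p) := by rw [← h, Equiv.apply_symm_apply]
      have hp : p ∈ A := (inl_mem_SS5 q).mp (he ▸ hmem)
      simp [tau5, hk, h, Finset.mem_compl, hp, he]
    · have he : σ k = q (Sum.inr p) := by rw [← h, Equiv.apply_symm_apply]
      have hp : p ∈ A := (inr_mem_SS5 q).mp (he ▸ hmem)
      simp [tau5, hk, h, Finset.mem_compl, hp, he]
  · have hmem := h3 k hk
    rcases h : q.symm (σ k) with p | p
    · have he : σ k = q (Sum.inl p) := by rw [← h, Equiv.apply_symm_apply]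
      have hp : p ∉ A := fun hp => hmem (he ▸ (inl_mem_SS5 q).mpr hp)
      simp [tau5, hk, h, Finset.mem_compl, hp]
    · have he : σ k = q (Sum.inr p) := by rw [← h, Equiv.apply_symm_apply]
      have hp : p ∉ A := fun hp => hmem (he ▸ (inr_mem_SS5 q).mpr hp)
      simp [tau5, hk, h, Finset.mem_compl, hp]

lemma Phi5_valid (hj : j ≤ n) (A : Finset (Fin n)) (hA : A.card = j)
    (π : Equiv.Perm (Fin (2 * j))) (π' : Equiv.Perm (Fin (2 * n - 2 * j))) :
    Function.Bijective (tau5 j q (Phi5 n j q hj A hA π π')) := by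
  rw [tau_decomp_gen A _ (Phi5_mem hj A hA π π') (Phi5_not_mem hj A hA π π')]
  exact (q.permCongr (swapSum5 Aᶜ) * Phi5 n j q hj A hA π π').bijective

lemma SS5_char (hj : j ≤ n) (A : Finset (Fin n)) (hA : A.card = j)
    (π : Equiv.Perm (Fin (2 * j))) (π' : Equiv.Perm (Fin (2 * n - 2 * j))) (v : Fin (2 * n)) :
    v ∈ SS5 q A ↔ ∃ k : Fin (2 * n), (k : ℕ) < 2 * j ∧ Phi5 n j q hj A hA π π' k = v := by
  constructor
  · intro hv
    refine ⟨(Phi5 n j q hj A hA π π').symm v, ?_, by simp⟩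
    by_contra hk
    exact (Phi5_not_mem hj A hA π π' _ hk)
      (by rw [Equiv.apply_symm_apply]; exact hv)
  · rintro ⟨k, hk, rfl⟩
    exact Phi5_mem hj A hA π π' k hk

lemma cardP5 (hj : j ≤ n) :
    (Finset.univ.filter
      (fun σ : Equiv.Perm (Fin (2 * n)) => Function.Bijective (tau5 j q σ))).card
      = n.choose j * ((2 * j).factorial * (2 * n - 2 * j).factorial) := by
  classical
  have hbij : Function.Bijective (fun x : ({A : Finset (Fin n) // A.card = j} ×
      Equiv.Perm (Fin (2 * j)) × Equiv.Perm (Fin (2 * n - 2 * j))) =>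
      (⟨Phi5 n j q hj x.1.1 x.1.2 x.2.1 x.2.2, Phi5_valid hj _ _ _ _⟩ :
        {σ : Equiv.Perm (Fin (2 * n)) // Function.Bijective (tau5 j q σ)})) := by
    constructor
    · rintro ⟨⟨A, hA⟩, π, π'⟩ ⟨⟨A', hA'⟩, ρ, ρ'⟩ h
      simp only [Subtype.mk_eq_mk] at h
      have hAA : A = A' := by
        ext p
        have hv1 := SS5_char (q := q) hj A hA π π' (q (Sum.inl p))
        have hv2 := SS5_char (q := q) hj A' hA' ρ ρ' (q (Sum.inl p))
        rw [h] at hv1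
        rw [inl_mem_SS5] at hv1 hv2
        exact hv1.trans hv2.symm
      subst hAA
      obtain rfl : hA = hA' := Subsingleton.elim _ _
      have hππ : π = ρ := by
        ext a
        have h2 := congrArg (fun (e : Equiv.Perm (Fin (2 * n))) =>
          e ((E05 n j hj).symm (Sum.inl a))) h
        simp only [Phi5_inl] at h2
        exact congrArg Fin.val ((eS5 n j q A hA).injective (Subtype.coe_injective h2))
      have hππ' : π' = ρ' := by
        ext b
        have h2 := congrArg (fun (e : Equiv.Perm (Fin (2 * n))) =>
          e ((E05 n j hj).symm (Sum.inr b))) h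
        simp only [Phi5_inr] at h2
        exact congrArg Fin.val ((eC5 n j q hj A hA).injective (Subtype.coe_injective h2))
      simp [hππ, hππ']
    · rintro ⟨σ, hσ⟩
      have hinj : Function.Injective (tau5 j q σ) := hσ.1
      have hA : (Aof5 j q σ).card = j := cardA_5 (by omega) hinj
      have hmem1 : ∀ a : Fin (2 * j),
          σ ((E05 n j hj).symm (Sum.inl a)) ∈ SS5 q (Aof5 j q σ) :=
        fun a => claim2_5 hinj _ (by rw [E05_symm_inl]; exact a.isLt)
      have hmem2 : ∀ b : Fin (2 * n - 2 * j),
          σ ((E05 n j hj).symm (Sum.inr b)) ∉ SS5 q (Aof5 j q σ) :=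
        fun b => claim3_5 hinj _ (by rw [E05_symm_inr]; omega)
      have hfπ : Function.Injective (fun a : Fin (2 * j) =>
          (eS5 n j q (Aof5 j q σ) hA).symm ⟨_, hmem1 a⟩) := by
        intro a b hab
        have h2 := (eS5 n j q (Aof5 j q σ) hA).symm.injective hab
        rw [Subtype.mk_eq_mk] at h2
        have h3 := (E05 n j hj).symm.injective (σ.injective h2)
        exact Sum.inl_injective h3
      have hfπ' : Function.Injective (fun b : Fin (2 * n - 2 * j) =>
          (eC5 n j q hj (Aof5 j q σ) hA).symm ⟨_, hmem2 b⟩) := by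
        intro a b hab
        have h2 := (eC5 n j q hj (Aof5 j q σ) hA).symm.injective hab
        rw [Subtype.mk_eq_mk] at h2
        have h3 := (E05 n j hj).symm.injective (σ.injective h2)
        exact Sum.inr_injective h3
      refine ⟨⟨⟨Aof5 j q σ, hA⟩,
        Equiv.ofBijective _ ((Finite.injective_iff_bijective).mp hfπ),
        Equiv.ofBijective _ ((Finite.injective_iff_bijective).mp hfπ')⟩, ?_⟩
      apply Subtype.ext
      simp only
      apply Equiv.ext
      intro k
      by_cases hk : (k : ℕ) < 2 * j
      · obtain ⟨a, ha⟩ := E05_cases hj k hk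
        rw [← ha, Phi5_inl]
        simp
      · obtain ⟨b, hb⟩ := E05_cases' hj k hk
        rw [← hb, Phi5_inr]
        simp [eC5]
  have hcount := (Fintype.card_congr (Equiv.ofBijective _ hbij)).symm
  rw [Fintype.card_prod, Fintype.card_prod, Fintype.card_finset_len,
    Fintype.card_perm, Fintype.card_perm, Fintype.card_fin, Fintype.card_fin,
    Fintype.card_fin] at hcount
  rw [← Fintype.card_subtype, hcount]

lemma comb5 {n : ℕ} (j : ℕ) (hj : j ≤ n) (q : (Fin n ⊕ Fin n) ≃ Fin (2 * n)) :
    ∑ σ : Equiv.Perm (Fin (2 * n)),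
      (Equiv.Perm.sign σ : ℤ) *
        (∏ k : Fin (2 * n), if (k : ℕ) < 2 * j ∧ (q.symm (σ k)).isRight then (-1 : ℤ) else 1) *
        psgn5 (tau5 j q σ)
    = (-1) ^ n * (n.choose j * ((2 * j).factorial * (2 * n - 2 * j).factorial)) := by
  classical
  rw [← Finset.sum_filter_of_ne
    (p := fun σ : Equiv.Perm (Fin (2 * n)) => Function.Bijective (tau5 j q σ))
    (fun σ _ hne => by
      by_contra hb
      exact hne (by rw [psgn5_not_bij _ hb, mul_zero]))]
  rw [Finset.sum_congr rfl
    (fun σ hσ => value5 hj ((Finset.mem_filter.mp hσ).2.1)),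
    Finset.sum_const, cardP5 hj, nsmul_eq_mul]
  push_cast
  ring

end param
section algebra
open ExteriorAlgebra

variable (W : Type*) [AddCommGroup W] [Module ℂ W]

def reL5 : (W →ₗ[ℂ] ℂ) →ₗ[ℝ] (W →ₗ[ℝ] ℝ) where
  toFun φ := Complex.reLm.comp (φ.restrictScalars ℝ)
  map_add' φ ψ := by ext w; simp
  map_smul' r φ := by ext w; simp

def imL5 : (W →ₗ[ℂ] ℂ) →ₗ[ℝ] (W →ₗ[ℝ] ℝ) where
  toFun φ := Complex.imLm.comp (φ.restrictScalars ℝ)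
  map_add' φ ψ := by ext w; simp
  map_smul' r φ := by ext w; simp

lemma reL5_apply (φ : W →ₗ[ℂ] ℂ) : reL5 W φ = Complex.reLm.comp (φ.restrictScalars ℝ) := rfl

lemma imL5_apply (φ : W →ₗ[ℂ] ℂ) : imL5 W φ = Complex.imLm.comp (φ.restrictScalars ℝ) := rfl

lemma reL5_smul_I (ψ : W →ₗ[ℂ] ℂ) : reL5 W (Complex.I • ψ) = - imL5 W ψ := by
  ext w
  simp [reL5, imL5, Complex.mul_re]

lemma imL5_smul_I (ψ : W →ₗ[ℂ] ℂ) : imL5 W (Complex.I • ψ) = reL5 W ψ := by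
  ext w
  simp [reL5, imL5, Complex.mul_im]

variable (m j : ℕ)

def G5 : MultilinearMap ℝ (fun _ : Fin m => (W →ₗ[ℂ] ℂ))
    (ExteriorAlgebra ℝ (W →ₗ[ℝ] ℝ)) :=
  (MultilinearMap.mkPiAlgebraFin ℝ m (ExteriorAlgebra ℝ (W →ₗ[ℝ] ℝ))).compLinearMap
    (fun k => if (k : ℕ) < 2 * j then (ExteriorAlgebra.ι ℝ).comp (reL5 W)
      else (ExteriorAlgebra.ι ℝ).comp (imL5 W))

lemma mem_take_finRange5 {m t : ℕ} {k : Fin m} (h : k ∈ (List.finRange m).take t) :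
    (k : ℕ) < t := by
  obtain ⟨i, hi, he⟩ := List.mem_iff_getElem.mp h
  rw [List.getElem_take, List.getElem_finRange] at he
  have := (List.length_take (i := t) (l := List.finRange m)) ▸ hi
  subst he
  simp only [List.length_take, List.length_finRange, lt_min_iff, Fin.val_cast] at this ⊢
  exact this.1

lemma mem_drop_finRange5 {m t : ℕ} {k : Fin m} (h : k ∈ (List.finRange m).drop t) :
    ¬ (k : ℕ) < t := by
  obtain ⟨i, hi, he⟩ := List.mem_iff_getElem.mp h
  rw [List.getElem_drop, List.getElem_finRange] at he
  subst he
  simp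

lemma G5_apply (v : Fin m → (W →ₗ[ℂ] ℂ)) :
    G5 W m j v =
      (((List.finRange m).take (2 * j)).map (fun k => ι ℝ (reL5 W (v k)))).prod *
      (((List.finRange m).drop (2 * j)).map (fun k => ι ℝ (imL5 W (v k)))).prod := by
  rw [G5, MultilinearMap.compLinearMap_apply, MultilinearMap.mkPiAlgebraFin_apply,
    List.ofFn_eq_map]
  conv_lhs => rw [← List.take_append_drop (2 * j) (List.finRange m)]
  rw [List.map_append, List.prod_append]
  congr 1
  · refine congrArg List.prod (List.map_congr_left ?_)
    intro k hk
    rw [if_pos (mem_take_finRange5 hk)]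
    rfl
  · refine congrArg List.prod (List.map_congr_left ?_)
    intro k hk
    rw [if_neg (mem_drop_finRange5 hk)]
    rfl

def gR5 : (W →ₗ[ℂ] ℂ) [⋀^Fin m]→ₗ[ℝ] (ExteriorAlgebra ℝ (W →ₗ[ℝ] ℝ)) :=
  (ExteriorAlgebra.ιMulti ℝ m).compLinearMap (reL5 W)

lemma gR5_apply (v : Fin m → (W →ₗ[ℂ] ℂ)) :
    gR5 W m v = ((List.finRange m).map (fun k => ι ℝ (reL5 W (v k)))).prod := by
  rw [gR5, AlternatingMap.compLinearMap_apply, ExteriorAlgebra.ιMulti_apply,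
    List.ofFn_eq_map]

end algebra
end AuxStmt5SEC

open ExteriorAlgebra


set_option synthInstance.maxHeartbeats 1000000 in
set_option maxHeartbeats 1000000 in
/-- Let `W` be an `n`-dimensional complex vector space (`n ≥ 1`), regarded
as a real vector space, and let `φ_1,…,φ_{2n} : W → ℂ` be `ℂ`-linear functionals. With
`a_k := Re∘φ_k` and `b_k := Im∘φ_k` (`ℝ`-linear functionals on `W`), for every
`0 ≤ j ≤ n` one has
`Alt_{2n} [ a_1∧…∧a_{2j} ∧ b_{2j+1}∧…∧b_{2n} ]
   = ((2n)!·C(n,j)/C(2n,2j)) · a_1∧a_2∧…∧a_{2n}`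
in `Λ^{2n}_ℝ(W*_ℝ)` (realized inside the exterior algebra of the real dual of `W`),
where `Alt_{2n}` permutes the functionals `φ_1,…,φ_{2n}`. -/
theorem stmt_5 (W : Type*) [AddCommGroup W] [Module ℂ W] (n : ℕ) (hn : 1 ≤ n)
    [FiniteDimensional ℂ W] (hdim : Module.finrank ℂ W = n)
    (φ : Fin (2 * n) → W →ₗ[ℂ] ℂ) (j : ℕ) (hj : j ≤ n) :
    ∑ σ : Equiv.Perm (Fin (2 * n)), (Equiv.Perm.sign σ : ℤ) •
      ((((List.finRange (2 * n)).take (2 * j)).map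
          (fun k => ι ℝ (Complex.reLm.comp ((φ (σ k)).restrictScalars ℝ)))).prod *
       (((List.finRange (2 * n)).drop (2 * j)).map
          (fun k => ι ℝ (Complex.imLm.comp ((φ (σ k)).restrictScalars ℝ)))).prod)
    = ((((2 * n).factorial : ℝ) * ((n.choose j : ℝ))) / (((2 * n).choose (2 * j) : ℝ))) •
        ((List.finRange (2 * n)).map
          (fun k => ι ℝ (Complex.reLm.comp ((φ k).restrictScalars ℝ)))).prod := by
  classical
  set cR : ℝ := (((2 * n).factorial : ℝ) * ((n.choose j : ℝ))) / (((2 * n).choose (2 * j) : ℝ))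
    with hcR
  have hsplit : n + n = 2 * n := (two_mul n).symm
  set ε : Module.Basis (Fin n) ℂ (W →ₗ[ℂ] ℂ) :=
    (Module.finBasisOfFinrankEq ℂ W hdim).dualBasis with hε
  set Q0 : (Fin 2 × Fin n) ≃ (Fin n ⊕ Fin n) :=
    (finTwoEquiv.prodCongr (Equiv.refl (Fin n))).trans (Equiv.boolProdEquivSum (Fin n)) with hQ0
  set q : (Fin n ⊕ Fin n) ≃ Fin (2 * n) := finSumFinEquiv.trans (finCongr hsplit) with hq
  set B : Module.Basis (Fin (2 * n)) ℝ (W →ₗ[ℂ] ℂ) :=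
    ((Complex.basisOneI.smulTower ε).reindex Q0).reindex q with hB
  have hBl : ∀ p : Fin n, B (q (Sum.inl p)) = ε p := by
    intro p
    rw [hB, Module.Basis.reindex_apply, Module.Basis.reindex_apply, Equiv.symm_apply_apply]
    have h0 : Q0.symm (Sum.inl p) = ((0 : Fin 2), p) := by
      rw [Equiv.symm_apply_eq]
      rfl
    rw [h0, Module.Basis.smulTower_apply]
    simp
  have hBr : ∀ p : Fin n, B (q (Sum.inr p)) = Complex.I • ε p := by
    intro p
    rw [hB, Module.Basis.reindex_apply, Module.Basis.reindex_apply, Equiv.symm_apply_apply]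
    have h0 : Q0.symm (Sum.inr p) = ((1 : Fin 2), p) := by
      rw [Equiv.symm_apply_eq]
      rfl
    rw [h0, Module.Basis.smulTower_apply]
    simp
  set d : Fin (2 * n) → (W →ₗ[ℝ] ℝ) :=
    fun k => Sum.elim (fun p => reL5 W (ε p)) (fun p => imL5 W (ε p))
      (q.symm k) with hd
  -- pointwise evaluation of `G5` on permuted basis vectors
  have hGB : ∀ σ : Equiv.Perm (Fin (2 * n)),
      G5 W (2 * n) j (fun k => B (σ k)) =
        (((∏ k : Fin (2 * n),
            if (k : ℕ) < 2 * j ∧ (q.symm (σ k)).isRight then (-1 : ℝ) else 1)) *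
          ((psgn5 (tau5 j q σ) : ℤ) : ℝ)) •
          ExteriorAlgebra.ιMulti ℝ (2 * n) d := by
    intro σ
    have h1 : G5 W (2 * n) j (fun k => B (σ k)) =
        ExteriorAlgebra.ιMulti ℝ (2 * n) (fun k =>
          (if (k : ℕ) < 2 * j ∧ (q.symm (σ k)).isRight then (-1 : ℝ) else 1) •
            (d ∘ tau5 j q σ) k) := by
      rw [G5, MultilinearMap.compLinearMap_apply,
        MultilinearMap.mkPiAlgebraFin_apply, ExteriorAlgebra.ιMulti_apply]
      refine congrArg List.prod (congrArg List.ofFn (funext fun k => ?_))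
      rw [map_smul]
      rcases hz : q.symm (σ k) with p | p
      · have he : σ k = q (Sum.inl p) := by rw [← hz, Equiv.apply_symm_apply]
        by_cases hk : (k : ℕ) < 2 * j
        · have hτ : tau5 j q σ k = σ k := if_pos hk
          have hdv : (d ∘ tau5 j q σ) k = reL5 W (ε p) := by
            simp only [Function.comp_apply, hτ, hd, hz, Sum.elim_inl]
          rw [hdv, if_pos hk, if_neg (by simp [hz]), one_smul, he, hBl p]
          rfl
        · have hτ : tau5 j q σ k = q (Sum.inr p) := by
            rw [tau5, if_neg hk, hz]
            rfl
          have hdv : (d ∘ tau5 j q σ) k = imL5 W (ε p) := by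
            simp only [Function.comp_apply, hτ, hd, Equiv.symm_apply_apply, Sum.elim_inr]
          rw [hdv, if_neg hk, if_neg (by simp [hk]), one_smul, he, hBl p]
          rfl
      · have he : σ k = q (Sum.inr p) := by rw [← hz, Equiv.apply_symm_apply]
        by_cases hk : (k : ℕ) < 2 * j
        · have hτ : tau5 j q σ k = σ k := if_pos hk
          have hdv : (d ∘ tau5 j q σ) k = imL5 W (ε p) := by
            simp only [Function.comp_apply, hτ, hd, hz, Sum.elim_inr]
          rw [hdv, if_pos hk, if_pos (by simp [hz, hk]), he, hBr p, LinearMap.comp_apply]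
          rw [show (reL5 W) (Complex.I • ε p) = - imL5 W (ε p) from
            reL5_smul_I W (ε p)]
          rw [neg_smul, one_smul, map_neg]
        · have hτ : tau5 j q σ k = q (Sum.inl p) := by
            rw [tau5, if_neg hk, hz]
            rfl
          have hdv : (d ∘ tau5 j q σ) k = reL5 W (ε p) := by
            simp only [Function.comp_apply, hτ, hd, Equiv.symm_apply_apply, Sum.elim_inl]
          rw [hdv, if_neg hk, if_neg (by simp [hk]), one_smul, he, hBr p,
            LinearMap.comp_apply]
          rw [show (imL5 W) (Complex.I • ε p) = reL5 W (ε p) from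
            imL5_smul_I W (ε p)]
    rw [h1]
    have h2 := (ExteriorAlgebra.ιMulti ℝ (2 * n)
      (M := W →ₗ[ℝ] ℝ)).toMultilinearMap.map_smul_univ
      (fun k => if (k : ℕ) < 2 * j ∧ (q.symm (σ k)).isRight then (-1 : ℝ) else 1)
      (d ∘ tau5 j q σ)
    simp only [AlternatingMap.coe_multilinearMap] at h2
    rw [h2, altmap_comp_fun, ← Int.cast_smul_eq_zsmul ℝ, smul_smul]
  -- evaluation of the RHS alternating map on the basis
  have hfamR : (fun k => reL5 W (B k)) =
      fun k => (if (q.symm k).isRight then (-1 : ℝ) else 1) • d k := by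
    funext k
    rcases hz : q.symm k with p | p
    · have he : k = q (Sum.inl p) := by rw [← hz, Equiv.apply_symm_apply]
      rw [he, hBl]
      simp [hd]
    · have he : k = q (Sum.inr p) := by rw [← hz, Equiv.apply_symm_apply]
      rw [he, hBr, reL5_smul_I]
      simp [hd]
      exact (neg_one_smul ℝ _).symm
  have hgB : gR5 W (2 * n) ⇑B = ((-1 : ℝ) ^ n) • ExteriorAlgebra.ιMulti ℝ (2 * n) d := by
    rw [gR5, AlternatingMap.compLinearMap_apply]
    rw [show (fun i => reL5 W (B i)) =
      fun k => (if (q.symm k).isRight then (-1 : ℝ) else 1) • d k from hfamR]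
    have h2 := (ExteriorAlgebra.ιMulti ℝ (2 * n)
      (M := W →ₗ[ℝ] ℝ)).toMultilinearMap.map_smul_univ
      (fun k => if (q.symm k).isRight then (-1 : ℝ) else 1) d
    simp only [AlternatingMap.coe_multilinearMap] at h2
    rw [h2]
    congr 1
    have h3 : ∏ k : Fin (2 * n), (if (q.symm k).isRight then (-1 : ℝ) else 1)
        = ∏ z : Fin n ⊕ Fin n, (if z.isRight then (-1 : ℝ) else 1) :=
      (Fintype.prod_equiv q (fun z => if z.isRight then (-1 : ℝ) else 1)
        (fun k => if (q.symm k).isRight then (-1 : ℝ) else 1) (fun z => by simp)).symm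
    rw [h3, Fintype.prod_sum_type]
    simp [Finset.prod_const, Finset.card_univ]
  -- the scalar identity
  have hbin := Nat.choose_mul_factorial_mul_factorial (show 2 * j ≤ 2 * n by omega)
  have hbinR : (((2 * n).choose (2 * j) : ℝ)) * ((2 * j).factorial : ℝ) *
      ((2 * n - 2 * j).factorial : ℝ) = ((2 * n).factorial : ℝ) := by
    exact_mod_cast congrArg (fun z : ℕ => (z : ℝ)) hbin
  have hne : (((2 * n).choose (2 * j) : ℝ)) ≠ 0 :=
    Nat.cast_ne_zero.mpr (Nat.choose_pos (by omega)).ne'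
  have hcRval : cR = ((n.choose j : ℝ) * (((2 * j).factorial : ℝ) *
      ((2 * n - 2 * j).factorial : ℝ))) := by
    rw [hcR, ← hbinR]
    field_simp
  have hscal : (∑ σ : Equiv.Perm (Fin (2 * n)),
      (((Equiv.Perm.sign σ : ℤ) : ℝ) *
        ((∏ k : Fin (2 * n),
            if (k : ℕ) < 2 * j ∧ (q.symm (σ k)).isRight then (-1 : ℝ) else 1) *
          ((psgn5 (tau5 j q σ) : ℤ) : ℝ))))
      = cR * (-1) ^ n := by
    have hZ := comb5 j hj q
    have hZ' := congrArg (fun z : ℤ => (z : ℝ)) hZ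
    push_cast at hZ'
    calc (∑ σ : Equiv.Perm (Fin (2 * n)),
        (((Equiv.Perm.sign σ : ℤ) : ℝ) *
          ((∏ k : Fin (2 * n),
              if (k : ℕ) < 2 * j ∧ (q.symm (σ k)).isRight then (-1 : ℝ) else 1) *
            ((psgn5 (tau5 j q σ) : ℤ) : ℝ))))
        = ∑ σ : Equiv.Perm (Fin (2 * n)),
          (((Equiv.Perm.sign σ : ℤ) : ℝ) *
            (∏ k : Fin (2 * n),
              if (k : ℕ) < 2 * j ∧ (q.symm (σ k)).isRight then (-1 : ℝ) else 1) *
            ((psgn5 (tau5 j q σ) : ℤ) : ℝ)) :=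
          Finset.sum_congr rfl (fun σ _ => by ring)
      _ = (-1) ^ n * ((n.choose j : ℝ) * (((2 * j).factorial : ℝ) *
            ((2 * n - 2 * j).factorial : ℝ))) := hZ'
      _ = cR * (-1) ^ n := by rw [hcRval]; ring
  -- the two alternating maps agree
  have hmain : (MultilinearMap.alternatization (G5 W (2 * n) j) :
      (W →ₗ[ℂ] ℂ) [⋀^Fin (2 * n)]→ₗ[ℝ] ExteriorAlgebra ℝ (W →ₗ[ℝ] ℝ))
      = cR • gR5 W (2 * n) := by
    apply Module.Basis.ext_alternating B
    intro v hv
    have hbv : Function.Bijective v := Finite.injective_iff_bijective.mp hv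
    have hveq : (fun i => B (v i)) = ⇑B ∘ ⇑(Equiv.ofBijective v hbv) := rfl
    rw [hveq, AlternatingMap.map_perm, AlternatingMap.map_perm]
    congr 1
    calc (MultilinearMap.alternatization (G5 W (2 * n) j)) ⇑B
        = ∑ σ : Equiv.Perm (Fin (2 * n)),
            (((Equiv.Perm.sign σ : ℤ) : ℝ) *
              ((∏ k : Fin (2 * n),
                  if (k : ℕ) < 2 * j ∧ (q.symm (σ k)).isRight then (-1 : ℝ) else 1) *
                ((psgn5 (tau5 j q σ) : ℤ) : ℝ))) • ExteriorAlgebra.ιMulti ℝ (2 * n) d := by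
          rw [MultilinearMap.alternatization_apply]
          refine Finset.sum_congr rfl fun σ _ => ?_
          rw [MultilinearMap.domDomCongr_apply, hGB σ, Units.smul_def,
            ← Int.cast_smul_eq_zsmul ℝ, smul_smul]
      _ = (∑ σ : Equiv.Perm (Fin (2 * n)),
            (((Equiv.Perm.sign σ : ℤ) : ℝ) *
              ((∏ k : Fin (2 * n),
                  if (k : ℕ) < 2 * j ∧ (q.symm (σ k)).isRight then (-1 : ℝ) else 1) *
                ((psgn5 (tau5 j q σ) : ℤ) : ℝ)))) • ExteriorAlgebra.ιMulti ℝ (2 * n) d := by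
          rw [Finset.sum_smul]
      _ = (cR * (-1) ^ n) • ExteriorAlgebra.ιMulti ℝ (2 * n) d := by rw [hscal]
      _ = cR • (((-1 : ℝ) ^ n) • ExteriorAlgebra.ιMulti ℝ (2 * n) d) := by rw [smul_smul]
      _ = (cR • gR5 W (2 * n)) ⇑B := by rw [← hgB, AlternatingMap.smul_apply]
  -- relate the statement to the alternating maps
  have hL : (∑ σ : Equiv.Perm (Fin (2 * n)), (Equiv.Perm.sign σ : ℤ) •
      ((((List.finRange (2 * n)).take (2 * j)).map
          (fun k => ι ℝ (Complex.reLm.comp ((φ (σ k)).restrictScalars ℝ)))).prod *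
       (((List.finRange (2 * n)).drop (2 * j)).map
          (fun k => ι ℝ (Complex.imLm.comp ((φ (σ k)).restrictScalars ℝ)))).prod))
      = (MultilinearMap.alternatization (G5 W (2 * n) j)) φ := by
    rw [MultilinearMap.alternatization_apply]
    refine Finset.sum_congr rfl fun σ _ => ?_
    rw [MultilinearMap.domDomCongr_apply, G5_apply, Units.smul_def]
    rfl
  rw [hL, hmain, AlternatingMap.smul_apply, gR5_apply]
  rfl
end

section
/- Let n ≥ 1 and let x_0, x_1, …, x_{n−1} be elements of a vector space over ℚ (e.g., real numbers). Suppose that for every integer i with 0 ≤ i ≤ n−1 one has Σ_{j=0}^{n−1} C(2n−i, 2j+1−i) · x_j = 0, where C(a,b) := 0 whenever b < 0. Then x_j = 0 for every 0 ≤ j ≤ n−1. (This is the linear-algebraic core of the proof of Lemma 6.1(I): the n × n system forces all x_j to vanish.) -/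
open Polynomial Finset

private lemma key_lemma (n : ℕ) (hn : 1 ≤ n) (a : ℕ → ℚ)
    (h : ∀ j < n, ∑ i ∈ Finset.range n,
      a i * (if i ≤ 2*j+1 then ((2*n - i).choose (2*j+1 - i) : ℚ) else 0) = 0) :
    ∀ i < n, a i = 0 := by
  set P : ℚ[X] := ∑ i ∈ Finset.range n, C (a i) * ((X + 1) ^ (2*n - i) * X ^ i) with hP
  have hcoeff : ∀ k, P.coeff k =
      ∑ i ∈ Finset.range n, a i * (if i ≤ k then ((2*n - i).choose (k - i) : ℚ) else 0) := by
    intro k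
    rw [hP, Polynomial.finset_sum_coeff]
    refine Finset.sum_congr rfl fun i hi => ?_
    rw [Polynomial.coeff_C_mul, Polynomial.coeff_mul_X_pow',
      Polynomial.coeff_X_add_one_pow]
  have hdeg : P.natDegree ≤ 2 * n := by
    refine Polynomial.natDegree_sum_le_of_forall_le _ _ fun i hi => ?_
    have hi' : i < n := Finset.mem_range.mp hi
    have hb : (C (a i) * ((X + 1) ^ (2*n - i) * X ^ i)).natDegree ≤ (2*n - i) + i := by
      compute_degree
    omega
  have hodd : ∀ k, Odd k → P.coeff k = 0 := by
    intro k hk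
    obtain ⟨j, hj⟩ := hk
    by_cases hjn : j < n
    · rw [hcoeff, hj]
      exact h j hjn
    · apply Polynomial.coeff_eq_zero_of_natDegree_lt
      omega
  have heven : P.comp (-X) = P := by
    rw [Polynomial.comp_eq_sum_left]
    conv_rhs => rw [← Polynomial.sum_C_mul_X_pow_eq P]
    rw [Polynomial.sum_def, Polynomial.sum_def]
    refine Finset.sum_congr rfl fun e he => ?_
    have h2 : Even e := by
      by_contra hodd'
      exact Polynomial.mem_support_iff.mp he (hodd e (Nat.not_even_iff_odd.mp hodd'))
    rw [neg_pow, h2.neg_one_pow, one_mul]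
  have hdvd1 : ((X + 1 : ℚ[X])) ^ (n + 1) ∣ P := by
    rw [hP]
    refine Finset.dvd_sum fun i hi => ?_
    have hi' : i < n := Finset.mem_range.mp hi
    have : ((X + 1 : ℚ[X])) ^ (n + 1) ∣ (X + 1 : ℚ[X]) ^ (2*n - i) :=
      pow_dvd_pow _ (by omega)
    exact Dvd.dvd.mul_left (this.mul_right _) _
  have hdvd2 : ((1 - X : ℚ[X])) ^ (n + 1) ∣ P := by
    obtain ⟨Q, hQ⟩ := hdvd1
    refine ⟨Q.comp (-X), ?_⟩
    conv_lhs => rw [← heven, hQ]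
    rw [Polynomial.mul_comp, Polynomial.pow_comp, Polynomial.add_comp,
      Polynomial.X_comp, Polynomial.one_comp]
    ring_nf
  have hcop : IsCoprime ((X + 1 : ℚ[X]) ^ (n+1)) ((1 - X : ℚ[X]) ^ (n+1)) := by
    refine IsCoprime.pow ?_
    refine ⟨C (1/2), C (1/2), ?_⟩
    have h2 : (2 : ℚ[X]) = C 2 := by norm_cast
    ring_nf
    rw [h2, ← Polynomial.C_mul]
    norm_num
  have hdvd : ((X + 1 : ℚ[X]) ^ (n+1)) * ((1 - X : ℚ[X]) ^ (n+1)) ∣ P :=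
    hcop.mul_dvd hdvd1 hdvd2
  have hne1 : (X + 1 : ℚ[X]) ≠ 0 := fun hc => by
    simpa using congrArg (Polynomial.coeff · 0) hc
  have hne2 : (1 - X : ℚ[X]) ≠ 0 := fun hc => by
    simpa using congrArg (Polynomial.coeff · 0) hc
  have hP0 : P = 0 := by
    by_contra hne
    have hle := Polynomial.natDegree_le_of_dvd hdvd hne
    have e1 : (X + 1 : ℚ[X]).natDegree = 1 := by compute_degree!
    have e2 : (1 - X : ℚ[X]).natDegree = 1 := by compute_degree!
    have h1 : ((X + 1 : ℚ[X]) ^ (n+1) * (1 - X : ℚ[X]) ^ (n+1)).natDegree = 2 * (n + 1) := by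
      rw [Polynomial.natDegree_mul (pow_ne_zero _ hne1) (pow_ne_zero _ hne2),
        Polynomial.natDegree_pow, Polynomial.natDegree_pow, e1, e2]
      ring
    omega
  intro i
  induction i using Nat.strong_induction_on with
  | _ i ih =>
    intro hi
    have hc := hcoeff i
    rw [hP0, Polynomial.coeff_zero] at hc
    have heq : ∑ i' ∈ Finset.range n,
        a i' * (if i' ≤ i then ((2*n - i').choose (i - i') : ℚ) else 0) = a i := by
      rw [Finset.sum_eq_single i]
      · simp
      · intro b hb hne
        rcases lt_or_gt_of_ne hne with hlt | hgt
        · rw [ih b hlt (by omega)]; ring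
        · rw [if_neg (by omega)]; ring
      · intro hmem
        exact absurd (Finset.mem_range.mpr hi) hmem
    rw [← heq, ← hc]

/-- Let `n ≥ 1` and let `x_0, …, x_{n−1}` be elements of a `ℚ`-vector space.
If for every `0 ≤ i ≤ n−1` one has `Σ_{j=0}^{n−1} C(2n−i, 2j+1−i) · x_j = 0`
(with `C(a,b) = 0` when `b < 0`), then `x_j = 0` for every `0 ≤ j ≤ n−1`. -/
theorem stmt_6 (n : ℕ) (hn : 1 ≤ n) (V : Type*) [AddCommGroup V] [Module ℚ V]
    (x : ℕ → V)
    (h : ∀ i : ℕ, i ≤ n - 1 →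
      ∑ j ∈ Finset.range n,
        (if i ≤ 2 * j + 1 then ((2 * n - i).choose (2 * j + 1 - i) : ℚ) else 0) • x j = 0) :
    ∀ j : ℕ, j ≤ n - 1 → x j = 0 := by
  intro k hk
  have hk' : k < n := by omega
  set M : Matrix (Fin n) (Fin n) ℚ := fun i j =>
    if (i : ℕ) ≤ 2 * (j : ℕ) + 1 then ((2 * n - (i : ℕ)).choose (2 * (j : ℕ) + 1 - (i : ℕ)) : ℚ)
    else 0 with hM
  have hinj : Function.Injective M.vecMulLinear := by
    rw [← LinearMap.ker_eq_bot, LinearMap.ker_eq_bot']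
    intro v hv
    have hkey := key_lemma n hn (fun i => if hi : i < n then v ⟨i, hi⟩ else 0) ?_
    · funext i
      have := hkey i.1 i.2
      simpa using this
    · intro j hj
      have hj' := congrFun hv ⟨j, hj⟩
      rw [Matrix.vecMulLinear_apply] at hj'
      simp only [Matrix.vecMul, dotProduct, Pi.zero_apply] at hj'
      have hconv : ∑ i ∈ Finset.range n, (if hi : i < n then v ⟨i, hi⟩ else 0) *
          (if i ≤ 2*j+1 then ((2*n - i).choose (2*j+1 - i) : ℚ) else 0)
          = ∑ i : Fin n, v i * M i ⟨j, hj⟩ := by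
        rw [← Fin.sum_univ_eq_sum_range (fun i => (if hi : i < n then v ⟨i, hi⟩ else 0) *
          (if i ≤ 2*j+1 then ((2*n - i).choose (2*j+1 - i) : ℚ) else 0)) n]
        refine Finset.sum_congr rfl fun i _ => ?_
        rw [dif_pos i.2]
      rw [hconv]
      exact hj'
  have hsurj := LinearMap.injective_iff_surjective.mp hinj
  obtain ⟨c, hc⟩ := hsurj ((Pi.single (⟨k, hk'⟩ : Fin n) (1 : ℚ)) : Fin n → ℚ)
  have hx : ∀ i : Fin n, ∑ j : Fin n, M i j • x j = 0 := by
    intro i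
    have hi := h i (by omega)
    rw [← Fin.sum_univ_eq_sum_range
      (fun j => (if (i:ℕ) ≤ 2*j+1 then ((2*n - (i:ℕ)).choose (2*j+1 - (i:ℕ)) : ℚ) else 0) • x j)
      n] at hi
    exact hi
  have key : x k = ∑ j : Fin n, ((Pi.single (⟨k, hk'⟩ : Fin n) (1:ℚ) : Fin n → ℚ)) j • x j := by
    rw [Finset.sum_eq_single (⟨k, hk'⟩ : Fin n)]
    · simp
    · intro b _ hne
      rw [Pi.single_eq_of_ne hne, zero_smul]
    · simp
  rw [key, ← hc]
  have expand : ∀ j : Fin n, M.vecMulLinear c j = ∑ i : Fin n, c i * M i j := by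
    intro j
    rw [Matrix.vecMulLinear_apply]
    simp [Matrix.vecMul, dotProduct]
  calc ∑ j : Fin n, M.vecMulLinear c j • x j
      = ∑ j : Fin n, ∑ i : Fin n, (c i * M i j) • x j := by
        refine Finset.sum_congr rfl fun j _ => ?_
        rw [expand j, Finset.sum_smul]
    _ = ∑ i : Fin n, c i • ∑ j : Fin n, M i j • x j := by
        rw [Finset.sum_comm]
        refine Finset.sum_congr rfl fun i _ => ?_
        rw [Finset.smul_sum]
        refine Finset.sum_congr rfl fun j _ => ?_
        rw [mul_smul]
    _ = 0 := by simp [hx]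
end

section
/- Let n ≥ 1 and let y_0, y_1, …, y_n be elements of a vector space over ℚ (e.g., real numbers). Suppose that for every integer i with 0 ≤ i ≤ n−1 one has Σ_{j=0}^{n} (−1)^{n−j} C(2n−i, 2j−i) · y_j = 0, where C(a,b) := 0 whenever b < 0. Then for every 0 ≤ j ≤ n one has C(2n, 2j) · y_j = C(n, j) · y_n; that is, y_j = (C(n,j)/C(2n,2j)) · y_n. (This is the linear-algebraic core of the proof of Lemma 6.1(II).) -/
open Polynomial Finset fwdDiff

-- chain identity: C(a,b)*C(b,c) = C(a,c)*C(a-c,b-c)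
lemma my_choose_chain (a b c : ℕ) (hba : b ≤ a) (hcb : c ≤ b) :
    a.choose b * b.choose c = a.choose c * (a - c).choose (b - c) := by
  have h1 := Nat.choose_mul_factorial_mul_factorial hba
  have h2 := Nat.choose_mul_factorial_mul_factorial hcb
  have h3 := Nat.choose_mul_factorial_mul_factorial (hcb.trans hba)
  have hbc : b - c ≤ a - c := Nat.sub_le_sub_right hba c
  have h4 := Nat.choose_mul_factorial_mul_factorial hbc
  have e : a - c - (b - c) = a - b := by omega
  rw [e] at h4
  have hpos : 0 < c.factorial * ((b - c).factorial * (a - b).factorial) :=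
    Nat.mul_pos c.factorial_pos (Nat.mul_pos (b - c).factorial_pos (a - b).factorial_pos)
  apply Nat.eq_of_mul_eq_mul_right hpos
  calc a.choose b * b.choose c * (c.factorial * ((b - c).factorial * (a - b).factorial))
      = (b.choose c * c.factorial * (b - c).factorial) * a.choose b * (a - b).factorial := by ring
    _ = b.factorial * a.choose b * (a - b).factorial := by rw [h2]
    _ = a.choose b * b.factorial * (a - b).factorial := by ring
    _ = a.factorial := h1
    _ = a.choose c * c.factorial * (a - c).factorial := h3.symm
    _ = ((a-c).choose (b-c) * (b-c).factorial * (a - b).factorial) * a.choose c * c.factorial := by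
        rw [h4]; ring
    _ = a.choose c * (a - c).choose (b - c) *
          (c.factorial * ((b - c).factorial * (a - b).factorial)) := by ring

-- forward difference of polynomial eval
lemma my_fwdDiff_eval (p : ℚ[X]) :
    Δ_[(1:ℚ)] (fun x : ℚ => p.eval x) = fun x : ℚ => (p.comp (X + 1) - p).eval x := by
  funext x
  simp [fwdDiff, Polynomial.eval_comp]

lemma my_degree_comp_sub (p : ℚ[X]) (N : ℕ) (hp : p.degree < N + 1) :
    (p.comp (X + 1) - p).degree < N := by
  rcases eq_or_ne p 0 with rfl | hp0
  · simp only [Polynomial.zero_comp, sub_zero, Polynomial.degree_zero]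
    exact WithBot.bot_lt_coe N
  · have hC : (X + 1 : ℚ[X]) = X + C 1 := by simp
    have hne : p.comp (X + 1) ≠ 0 := by
      rw [hC]; exact Polynomial.comp_X_add_C_ne_zero_iff.mpr hp0
    have hnd : (p.comp (X + 1)).natDegree = p.natDegree := by
      rw [Polynomial.natDegree_comp, hC, Polynomial.natDegree_X_add_C, mul_one]
    have hdeg : (p.comp (X + 1)).degree = p.degree := by
      rw [Polynomial.degree_eq_natDegree hne, Polynomial.degree_eq_natDegree hp0, hnd]
    have hnd1 : (X + C (1:ℚ)).natDegree ≠ 0 := by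
      rw [Polynomial.natDegree_X_add_C]; norm_num
    have hlc : (p.comp (X + 1)).leadingCoeff = p.leadingCoeff := by
      rw [hC, Polynomial.leadingCoeff_comp hnd1, (Polynomial.monic_X_add_C (1:ℚ)).leadingCoeff,
        one_pow, mul_one]
    have h5 := Polynomial.degree_sub_lt hdeg hne hlc
    rw [hdeg] at h5
    have h6 : p.degree ≤ (N : WithBot ℕ) := by
      rw [Polynomial.degree_eq_natDegree hp0] at hp ⊢
      exact_mod_cast Nat.lt_succ_iff.mp (by exact_mod_cast hp)
    exact lt_of_lt_of_le h5 h6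

-- n-th forward difference of poly of degree < n vanishes
lemma my_fd_zero : ∀ (N : ℕ) (p : ℚ[X]), p.degree < N →
    (Δ_[(1:ℚ)])^[N] (fun x : ℚ => p.eval x) = 0 := by
  intro N
  induction N with
  | zero =>
    intro p hp
    have : p = 0 := Polynomial.degree_eq_bot.mp (Nat.WithBot.lt_zero_iff.mp (by simpa using hp))
    subst this
    funext x; simp
  | succ N ih =>
    intro p hp
    rw [Function.iterate_succ_apply, my_fwdDiff_eval]
    exact ih _ (my_degree_comp_sub p N hp)

-- alternating binomial sum of polynomial values
lemma my_fd_sum (N : ℕ) (p : ℚ[X]) (hp : p.degree < N) :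
    ∑ j ∈ range (N + 1), (-1 : ℚ) ^ j * (N.choose j : ℚ) * p.eval (j : ℚ) = 0 := by
  have h0 := congrFun (my_fd_zero N p hp) 0
  rw [fwdDiff_iter_eq_sum_shift] at h0
  simp only [Pi.zero_apply] at h0
  have h1 : ∑ k ∈ range (N + 1), ((-1 : ℤ) ^ (N - k) * N.choose k) • p.eval ((0:ℚ) + k • (1:ℚ)) = 0 := h0
  have h2 : ∑ k ∈ range (N + 1), (-1 : ℚ) ^ (N - k) * (N.choose k : ℚ) * p.eval (k : ℚ) = 0 := by
    rw [← h1]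
    apply Finset.sum_congr rfl
    intro k _
    simp only [zero_add, nsmul_eq_mul, mul_one, zsmul_eq_mul]
    push_cast
    ring
  -- multiply h2 by (-1)^N
  have h3 : ∑ k ∈ range (N + 1), (-1 : ℚ) ^ N * ((-1 : ℚ) ^ (N - k) * (N.choose k : ℚ) * p.eval (k : ℚ)) = 0 := by
    rw [← Finset.mul_sum, h2, mul_zero]
  rw [← h3]
  apply Finset.sum_congr rfl
  intro k hk
  have hkN : k ≤ N := Nat.lt_succ_iff.mp (mem_range.mp hk)
  have hsign : (-1 : ℚ) ^ N * (-1 : ℚ) ^ (N - k) = (-1 : ℚ) ^ k := by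
    rw [← pow_add]
    have he : N + (N - k) = 2 * (N - k) + k := by omega
    rw [he, pow_add, pow_mul]
    norm_num
  rw [← hsign]; ring

-- eval of the falling-factorial polynomial
lemma my_prod_eval (i : ℕ) (m : ℕ) :
    (∏ r ∈ range i, ((m : ℚ) - (r : ℚ))) = (m.descFactorial i : ℚ) := by
  rcases le_or_gt i m with hle | hlt
  · rw [Nat.descFactorial_eq_prod_range, Nat.cast_prod]
    apply Finset.prod_congr rfl
    intro r hr
    have : r ≤ m := le_trans (le_of_lt (mem_range.mp hr)) hle
    rw [Nat.cast_sub this]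
  · rw [Nat.descFactorial_eq_zero_iff_lt.mpr hlt, Nat.cast_zero]
    apply Finset.prod_eq_zero (mem_range.mpr hlt)
    simp

-- the key binomial identity: alternating sum of C(n,j) C(2j,i) vanishes for i < n
lemma my_key_identity (n i : ℕ) (hi : i < n) :
    ∑ j ∈ range (n + 1), (-1 : ℚ) ^ j * (n.choose j : ℚ) * ((2 * j).choose i : ℚ) = 0 := by
  set p : ℚ[X] := ∏ r ∈ range i, (C 2 * X - C (r : ℚ)) with hp
  have hdeg : p.degree < (n : WithBot ℕ) := by
    have h1 : p.natDegree ≤ i := by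
      calc p.natDegree ≤ ∑ r ∈ range i, (C 2 * X - C (r : ℚ)).natDegree :=
            Polynomial.natDegree_prod_le _ _
        _ ≤ ∑ r ∈ range i, 1 := by
            apply Finset.sum_le_sum
            intro r _
            have : (C 2 * X - C (r : ℚ)) = C 2 * X + C (-(r:ℚ)) := by rw [map_neg]; ring
            rw [this]
            exact Polynomial.natDegree_linear_le
        _ = i := by simp
    calc p.degree ≤ (p.natDegree : WithBot ℕ) := Polynomial.degree_le_natDegree
      _ ≤ (i : WithBot ℕ) := by exact_mod_cast h1
      _ < (n : WithBot ℕ) := by exact_mod_cast hi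
  have heval : ∀ j : ℕ, p.eval ((j : ℚ)) = (i.factorial : ℚ) * ((2 * j).choose i : ℚ) := by
    intro j
    have h1 : p.eval ((j : ℚ)) = ∏ r ∈ range i, (2 * (j : ℚ) - (r : ℚ)) := by
      rw [hp, Polynomial.eval_prod]
      apply Finset.prod_congr rfl
      intro r _
      simp
    have h2 : (2 * (j : ℚ)) = ((2 * j : ℕ) : ℚ) := by push_cast; ring
    rw [h1]
    simp_rw [h2]
    rw [my_prod_eval i (2 * j), Nat.descFactorial_eq_factorial_mul_choose, Nat.cast_mul]
  have hfd := my_fd_sum n p hdeg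
  have h3 : ∑ j ∈ range (n + 1),
      (-1 : ℚ) ^ j * (n.choose j : ℚ) * ((i.factorial : ℚ) * ((2 * j).choose i : ℚ)) = 0 := by
    rw [← hfd]
    apply Finset.sum_congr rfl
    intro j _
    rw [heval j]
  have h4 : (i.factorial : ℚ) * ∑ j ∈ range (n + 1),
      (-1 : ℚ) ^ j * (n.choose j : ℚ) * ((2 * j).choose i : ℚ) = 0 := by
    rw [Finset.mul_sum, ← h3]
    apply Finset.sum_congr rfl
    intro j _
    ring
  have h5 : (i.factorial : ℚ) ≠ 0 := by exact_mod_cast i.factorial_ne_zero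
  exact (mul_eq_zero.mp h4).resolve_left h5

-- coefficient of p.comp(-X)
lemma my_coeff_comp_neg (p : ℚ[X]) (m : ℕ) :
    (p.comp (-X)).coeff m = (-1 : ℚ) ^ m * p.coeff m := by
  induction p using Polynomial.induction_on' with
  | add p q hp hq =>
    rw [Polynomial.add_comp, Polynomial.coeff_add, Polynomial.coeff_add, hp, hq]
    ring
  | monomial k a =>
    rw [← Polynomial.C_mul_X_pow_eq_monomial, Polynomial.mul_comp, Polynomial.C_comp,
      Polynomial.pow_comp, Polynomial.X_comp]
    rw [neg_pow, Polynomial.coeff_C_mul, Polynomial.coeff_C_mul, Polynomial.coeff_mul_X_pow']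
    rw [Polynomial.coeff_X_pow]
    have hc : ((-1 : ℚ[X]) ^ k) = C ((-1:ℚ)^k) := by rw [map_pow, map_neg, map_one]
    rw [hc]
    by_cases hkm : k = m
    · subst hkm
      rw [if_pos le_rfl, Nat.sub_self, Polynomial.coeff_C, if_pos rfl, if_pos rfl]
      ring
    · by_cases hle : k ≤ m
      · rw [if_pos hle, Polynomial.coeff_C, if_neg (by omega), if_neg (by omega)]
        ring
      · rw [if_neg hle, if_neg (by omega)]
        ring

lemma my_one_add_X_natDegree : (1 + X : ℚ[X]).natDegree = 1 := by
  rw [add_comm]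
  rw [show (1 : ℚ[X]) = C 1 from (map_one C).symm]
  exact Polynomial.natDegree_X_add_C 1

lemma my_one_add_X_ne_zero : (1 + X : ℚ[X]) ≠ 0 := by
  intro hzero
  have := my_one_add_X_natDegree
  rw [hzero] at this
  simp at this

lemma my_inj (n : ℕ) (hn : 1 ≤ n) (c : Fin n → ℚ)
    (hc : ∀ j : Fin (n+1), ∑ i : Fin n, c i *
      (if (i:ℕ) ≤ 2*(j:ℕ) then ((2*n - (i:ℕ)).choose (2*(j:ℕ) - (i:ℕ)) : ℚ) else 0) = 0) :
    c = 0 := by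
  set f : ℚ[X] := ∑ i : Fin n, C (c i) * ((1+X)^(2*n - (i:ℕ)) * X^(i:ℕ)) with hf
  have hcoeff : ∀ m : ℕ, f.coeff m = ∑ i : Fin n, c i *
      (if (i:ℕ) ≤ m then ((2*n - (i:ℕ)).choose (m - (i:ℕ)) : ℚ) else 0) := by
    intro m
    rw [hf, Polynomial.finset_sum_coeff]
    apply Finset.sum_congr rfl
    intro i _
    rw [Polynomial.coeff_C_mul, Polynomial.coeff_mul_X_pow']
    by_cases hle : (i:ℕ) ≤ m
    · rw [if_pos hle, if_pos hle, Polynomial.coeff_one_add_X_pow]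
    · rw [if_neg hle, if_neg hle, mul_zero]
  have hdeg : f.natDegree ≤ 2*n := by
    apply Polynomial.natDegree_sum_le_of_forall_le
    intro i _
    calc (C (c i) * ((1+X : ℚ[X])^(2*n - (i:ℕ)) * X^(i:ℕ))).natDegree
        ≤ (C (c i)).natDegree + ((1+X : ℚ[X])^(2*n - (i:ℕ)) * X^(i:ℕ)).natDegree :=
          Polynomial.natDegree_mul_le
      _ ≤ 0 + (((1+X : ℚ[X])^(2*n - (i:ℕ))).natDegree + (X^(i:ℕ) : ℚ[X]).natDegree) := by
          refine add_le_add (le_of_eq (Polynomial.natDegree_C _)) Polynomial.natDegree_mul_le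
      _ ≤ (2*n - (i:ℕ)) + (i:ℕ) := by
          rw [zero_add]
          apply add_le_add
          · calc ((1+X : ℚ[X])^(2*n - (i:ℕ))).natDegree
                ≤ (2*n - (i:ℕ)) * (1+X : ℚ[X]).natDegree := Polynomial.natDegree_pow_le
              _ = (2*n - (i:ℕ)) := by rw [my_one_add_X_natDegree, mul_one]
          · rw [Polynomial.natDegree_X_pow]
      _ ≤ 2*n := by omega
  have heven : ∀ m : ℕ, f.coeff (2*m) = 0 := by
    intro m
    by_cases hm : m ≤ n
    · have := hc ⟨m, by omega⟩
      rw [hcoeff (2*m)]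
      simpa using this
    · apply Polynomial.coeff_eq_zero_of_natDegree_lt
      omega
  have hodd : f.comp (-X) = -f := by
    apply Polynomial.ext
    intro m
    rw [my_coeff_comp_neg, Polynomial.coeff_neg]
    rcases Nat.even_or_odd m with he | ho
    · obtain ⟨r, rfl⟩ := he
      have : r + r = 2*r := by ring
      rw [this, heven r]
      ring
    · rw [ho.neg_one_pow]
      ring
  have hdvd1 : (1+X : ℚ[X])^(n+1) ∣ f := by
    apply Finset.dvd_sum
    intro i _
    have hsplit : 2*n - (i:ℕ) = (n+1) + (n-1 - (i:ℕ)) := by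
      have := i.isLt
      omega
    refine ⟨C (c i) * ((1+X)^(n-1-(i:ℕ)) * X^(i:ℕ)), ?_⟩
    rw [hsplit, pow_add]
    ring
  have hdvd2 : (1-X : ℚ[X])^(n+1) ∣ f := by
    have h1 := map_dvd (Polynomial.compRingHom (-X : ℚ[X])) hdvd1
    rw [Polynomial.coe_compRingHom_apply, Polynomial.coe_compRingHom_apply] at h1
    rw [hodd] at h1
    have h2 : ((1+X : ℚ[X])^(n+1)).comp (-X) = (1-X : ℚ[X])^(n+1) := by
      rw [Polynomial.pow_comp, Polynomial.add_comp, Polynomial.one_comp, Polynomial.X_comp]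
      ring_nf
    rw [h2] at h1
    exact (dvd_neg).mp h1
  have hbase : IsCoprime (1 + X : ℚ[X]) (1 - X) := by
    refine ⟨C (1/2), C (1/2), ?_⟩
    have h2 : (2 : ℚ[X]) = C 2 := (map_ofNat C 2).symm
    calc C (1/2:ℚ) * (1 + X) + C (1/2:ℚ) * (1 - X) = C (1/2:ℚ) * 2 := by ring
      _ = C (1/2:ℚ) * C 2 := by rw [h2]
      _ = C 1 := by rw [← map_mul]; norm_num
      _ = 1 := map_one C
  have hcop : IsCoprime ((1+X : ℚ[X])^(n+1)) ((1-X : ℚ[X])^(n+1)) := IsCoprime.pow hbase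
  have hprod := hcop.mul_dvd hdvd1 hdvd2
  have hf0 : f = 0 := by
    by_contra hne
    have hle := Polynomial.natDegree_le_of_dvd hprod hne
    have hX1 : (1+X : ℚ[X]) ≠ 0 := my_one_add_X_ne_zero
    have hX2 : (1-X : ℚ[X]) ≠ 0 := by
      intro hzero
      have : ((1-X : ℚ[X])).coeff 0 = 0 := by rw [hzero]; simp
      simp at this
    have hnd1 : ((1+X:ℚ[X])^(n+1)).natDegree = n+1 := by
      rw [Polynomial.natDegree_pow, my_one_add_X_natDegree, mul_one]
    have hnd2 : ((1-X:ℚ[X])^(n+1)).natDegree = n+1 := by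
      have : (1-X : ℚ[X]) = -(X - C 1) := by rw [map_one]; ring
      rw [Polynomial.natDegree_pow, this, Polynomial.natDegree_neg,
        Polynomial.natDegree_X_sub_C, mul_one]
    rw [Polynomial.natDegree_mul (pow_ne_zero _ hX1) (pow_ne_zero _ hX2), hnd1, hnd2] at hle
    omega
  have key : ∀ m : ℕ, ∀ hm : m < n, c ⟨m, hm⟩ = 0 := by
    intro m
    induction m using Nat.strong_induction_on with
    | _ m IH =>
      intro hm
      have h0 : f.coeff m = 0 := by rw [hf0]; simp
      rw [hcoeff m] at h0
      rw [Finset.sum_eq_single (⟨m, hm⟩ : Fin n)] at h0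
      · simpa using h0
      · intro i _ hne
        by_cases hle : (i:ℕ) ≤ m
        · have hlt : (i:ℕ) < m := lt_of_le_of_ne hle (fun he => hne (Fin.ext he))
          have hci := IH (i:ℕ) hlt i.isLt
          have : c i = 0 := by
            have he : (⟨(i:ℕ), i.isLt⟩ : Fin n) = i := Fin.eta i i.isLt
            rw [← he]; exact hci
          rw [this, zero_mul]
        · rw [if_neg hle, mul_zero]
      · intro hnotmem; exact absurd (Finset.mem_univ _) hnotmem
  funext i
  have := key (i:ℕ) i.isLt
  have he : (⟨(i:ℕ), i.isLt⟩ : Fin n) = i := Fin.eta i i.isLt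
  rw [he] at this
  simpa using this

lemma my_sign (a b : ℕ) (h : b ≤ a) : (-1:ℚ)^(a-b) = (-1)^a * (-1)^b := by
  calc (-1:ℚ)^(a-b) = (-1:ℚ)^(a-b) * ((-1:ℚ)^b * (-1:ℚ)^b) := by
        rw [← pow_add, ← two_mul, pow_mul]; norm_num
    _ = ((-1:ℚ)^(a-b) * (-1:ℚ)^b) * (-1:ℚ)^b := by ring
    _ = (-1:ℚ)^a * (-1:ℚ)^b := by rw [← pow_add, Nat.sub_add_cancel h]

theorem stmt_7' (n : ℕ) (hn : 1 ≤ n) (V : Type*) [AddCommGroup V] [Module ℚ V]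
    (y : ℕ → V)
    (h : ∀ i : ℕ, i ≤ n - 1 →
      ∑ j ∈ Finset.range (n + 1),
        ((-1 : ℚ) ^ (n - j) *
          (if i ≤ 2 * j then ((2 * n - i).choose (2 * j - i) : ℚ) else 0)) • y j = 0) :
    ∀ j : ℕ, j ≤ n → ((2 * n).choose (2 * j) : ℚ) • y j = (n.choose j : ℚ) • y n := by
  intro k hk
  rcases eq_or_lt_of_le hk with rfl | hkn
  · simp [Nat.choose_self]
  classical
  set M : Fin n → (Fin (n+1) → ℚ) := fun i j =>
    (-1 : ℚ) ^ (n - (j:ℕ)) *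
      (if (i:ℕ) ≤ 2*(j:ℕ) then ((2*n - (i:ℕ)).choose (2*(j:ℕ) - (i:ℕ)) : ℚ) else 0) with hM
  set v : Fin (n+1) → ℚ := fun j => ((n.choose (j:ℕ) : ℚ)) / (((2*n).choose (2*(j:ℕ)) : ℚ)) with hv
  set lam : (Fin (n+1) → ℚ) →ₗ[ℚ] ℚ :=
    ∑ j : Fin (n+1), v j • (LinearMap.proj j : (Fin (n+1) → ℚ) →ₗ[ℚ] ℚ) with hlam
  have hlam_apply : ∀ w : Fin (n+1) → ℚ, lam w = ∑ j : Fin (n+1), v j * w j := by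
    intro w
    rw [hlam]
    simp [LinearMap.sum_apply]
  have hlam_single : ∀ j0 : Fin (n+1), lam (Pi.single j0 (1:ℚ)) = v j0 := by
    intro j0
    rw [hlam_apply]
    rw [Finset.sum_eq_single j0]
    · rw [Pi.single_eq_same, mul_one]
    · intro j _ hne
      rw [Pi.single_eq_of_ne hne, mul_zero]
    · intro hmem; exact absurd (Finset.mem_univ _) hmem
  -- denominators nonzero
  have hden1 : ∀ j : Fin (n+1), (((2*n).choose (2*(j:ℕ)) : ℚ)) ≠ 0 := by
    intro j
    have : 2*(j:ℕ) ≤ 2*n := by have := j.isLt; omega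
    exact_mod_cast Nat.cast_ne_zero.mpr (Nat.choose_pos this).ne'
  have hden2 : ∀ i : Fin n, (((2*n).choose (i:ℕ) : ℚ)) ≠ 0 := by
    intro i
    have : (i:ℕ) ≤ 2*n := by have := i.isLt; omega
    exact_mod_cast Nat.cast_ne_zero.mpr (Nat.choose_pos this).ne'
  -- rows are annihilated by lam
  have hrow : ∀ i : Fin n, lam (M i) = 0 := by
    intro i
    rw [hlam_apply]
    have hterm : ∀ j : Fin (n+1), v j * M i j =
        ((-1:ℚ)^n / (((2*n).choose (i:ℕ) : ℚ))) *
          ((-1:ℚ)^(j:ℕ) * (n.choose (j:ℕ) : ℚ) * (((2*(j:ℕ)).choose (i:ℕ) : ℚ))) := by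
      intro j
      have hb : (if (i:ℕ) ≤ 2*(j:ℕ) then ((2*n - (i:ℕ)).choose (2*(j:ℕ)-(i:ℕ)) : ℚ) else 0)
            / (((2*n).choose (2*(j:ℕ)) : ℚ))
          = (((2*(j:ℕ)).choose (i:ℕ) : ℚ)) / (((2*n).choose (i:ℕ) : ℚ)) := by
        rw [div_eq_div_iff (hden1 j) (hden2 i)]
        by_cases hle : (i:ℕ) ≤ 2*(j:ℕ)
        · rw [if_pos hle]
          have hjn : 2*(j:ℕ) ≤ 2*n := by have := j.isLt; omega
          have := my_choose_chain (2*n) (2*(j:ℕ)) (i:ℕ) hjn hle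
          have hcast : ((2*n).choose (2*(j:ℕ)) * (2*(j:ℕ)).choose (i:ℕ) : ℚ)
              = ((2*n).choose (i:ℕ) * (2*n - (i:ℕ)).choose (2*(j:ℕ) - (i:ℕ)) : ℚ) := by
            exact_mod_cast congrArg (Nat.cast : ℕ → ℚ) this
          push_cast at hcast ⊢
          linarith [hcast]
        · rw [if_neg hle]
          have : (2*(j:ℕ)).choose (i:ℕ) = 0 := Nat.choose_eq_zero_of_lt (by omega)
          rw [this]
          simp
      have hsign : (-1:ℚ)^(n-(j:ℕ)) = (-1)^n * (-1)^(j:ℕ) :=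
        my_sign n (j:ℕ) (by have := j.isLt; omega)
      have hexp : v j * M i j = ((-1:ℚ)^(n-(j:ℕ))) * ((n.choose (j:ℕ) : ℚ)) *
          ((if (i:ℕ) ≤ 2*(j:ℕ) then ((2*n - (i:ℕ)).choose (2*(j:ℕ)-(i:ℕ)) : ℚ) else 0)
            / (((2*n).choose (2*(j:ℕ)) : ℚ))) := by
        rw [hv, hM]
        ring
      rw [hexp, hb, hsign]
      ring
    calc ∑ j : Fin (n+1), v j * M i j
        = ∑ j : Fin (n+1), ((-1:ℚ)^n / (((2*n).choose (i:ℕ) : ℚ))) *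
            ((-1:ℚ)^(j:ℕ) * (n.choose (j:ℕ) : ℚ) * (((2*(j:ℕ)).choose (i:ℕ) : ℚ))) :=
          Finset.sum_congr rfl (fun j _ => hterm j)
      _ = ((-1:ℚ)^n / (((2*n).choose (i:ℕ) : ℚ))) *
            ∑ j : Fin (n+1), ((-1:ℚ)^(j:ℕ) * (n.choose (j:ℕ) : ℚ) * (((2*(j:ℕ)).choose (i:ℕ) : ℚ))) := by
          rw [Finset.mul_sum]
      _ = 0 := by
          rw [Fin.sum_univ_eq_sum_range
            (fun j => (-1:ℚ)^j * (n.choose j : ℚ) * (((2*j).choose (i:ℕ) : ℚ))) (n+1)]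
          rw [my_key_identity n (i:ℕ) i.isLt, mul_zero]
  -- the linear map Phi
  set Phi : (Fin n → ℚ) →ₗ[ℚ] (Fin (n+1) → ℚ) :=
    ∑ i : Fin n, (LinearMap.proj i : (Fin n → ℚ) →ₗ[ℚ] ℚ).smulRight (M i) with hPhi
  have hPhi_apply : ∀ c : Fin n → ℚ, Phi c = ∑ i : Fin n, c i • M i := by
    intro c
    rw [hPhi]
    simp [LinearMap.sum_apply]
  have hinj : Function.Injective Phi := by
    apply LinearMap.ker_eq_bot.mp
    apply LinearMap.ker_eq_bot'.mpr
    intro c hc0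
    rw [hPhi_apply] at hc0
    apply my_inj n hn c
    intro j
    have h2 := congrFun hc0 j
    simp only [Finset.sum_apply, Pi.smul_apply, smul_eq_mul, Pi.zero_apply] at h2
    have h3 : (-1:ℚ)^(n-(j:ℕ)) * ∑ i : Fin n, c i *
        (if (i:ℕ) ≤ 2*(j:ℕ) then ((2*n - (i:ℕ)).choose (2*(j:ℕ) - (i:ℕ)) : ℚ) else 0) = 0 := by
      calc (-1:ℚ)^(n-(j:ℕ)) * ∑ i : Fin n, c i *
          (if (i:ℕ) ≤ 2*(j:ℕ) then ((2*n - (i:ℕ)).choose (2*(j:ℕ) - (i:ℕ)) : ℚ) else 0)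
          = ∑ i : Fin n, c i * M i j := by
            rw [Finset.mul_sum]
            apply Finset.sum_congr rfl
            intro i _
            rw [hM]
            ring
        _ = 0 := h2
    have hsne : ((-1:ℚ)^(n-(j:ℕ))) ≠ 0 := by
      apply pow_ne_zero
      norm_num
    exact (mul_eq_zero.mp h3).resolve_left hsne
  -- dimension count
  have hrange_rank : Module.finrank ℚ (LinearMap.range Phi) = n := by
    rw [LinearMap.finrank_range_of_inj hinj]
    exact Module.finrank_fin_fun ℚ
  have hlam_ne : lam ≠ 0 := by
    intro h0
    have h1 := hlam_single ⟨n, by omega⟩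
    rw [h0] at h1
    have h2 : v ⟨n, by omega⟩ = 1 := by
      rw [hv]
      simp [Nat.choose_self]
    rw [h2] at h1
    simp at h1
  have hker_rank : Module.finrank ℚ (LinearMap.ker lam) = n := by
    have h1 := Module.Dual.finrank_ker_add_one_of_ne_zero hlam_ne
    have h2 : Module.finrank ℚ (Fin (n+1) → ℚ) = n+1 := Module.finrank_fin_fun ℚ
    omega
  have hle : LinearMap.range Phi ≤ LinearMap.ker lam := by
    rintro w ⟨c, rfl⟩
    rw [LinearMap.mem_ker, hPhi_apply, map_sum]
    apply Finset.sum_eq_zero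
    intro i _
    rw [map_smul, hrow i, smul_zero]
  have heq : LinearMap.range Phi = LinearMap.ker lam :=
    Submodule.eq_of_le_of_finrank_le hle (by rw [hrange_rank, hker_rank])
  -- the target vector
  set kf : Fin (n+1) := ⟨k, by omega⟩ with hkf
  set nf : Fin (n+1) := ⟨n, by omega⟩ with hnf
  set t : Fin (n+1) → ℚ :=
    (((2*n).choose (2*k) : ℚ)) • (Pi.single kf (1:ℚ) : Fin (n+1) → ℚ)
      - ((n.choose k : ℚ)) • (Pi.single nf (1:ℚ) : Fin (n+1) → ℚ) with ht
  have hlam_t : lam t = 0 := by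
    rw [ht, map_sub, map_smul, map_smul, hlam_single, hlam_single]
    have hvk : v kf = ((n.choose k : ℚ)) / (((2*n).choose (2*k) : ℚ)) := by rw [hv]
    have hvn : v nf = 1 := by rw [hv]; simp [hnf, Nat.choose_self]
    rw [hvk, hvn, smul_eq_mul, smul_eq_mul]
    have hd : (((2*n).choose (2*k) : ℚ)) ≠ 0 := hden1 kf
    field_simp
    ring
  have htmem : t ∈ LinearMap.range Phi := by
    rw [heq, LinearMap.mem_ker]
    exact hlam_t
  obtain ⟨c, hcPhi⟩ := htmem
  -- rows annihilate y
  have hsum : ∀ i : Fin n, ∑ j : Fin (n+1), M i j • y (j:ℕ) = 0 := by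
    intro i
    have hi : (i:ℕ) ≤ n - 1 := by have := i.isLt; omega
    have hh := h (i:ℕ) hi
    rw [← Fin.sum_univ_eq_sum_range
      (fun j => ((-1 : ℚ) ^ (n - j) *
        (if (i:ℕ) ≤ 2 * j then ((2 * n - (i:ℕ)).choose (2 * j - (i:ℕ)) : ℚ) else 0)) • y j)
      (n+1)] at hh
    rw [hM]
    exact hh
  -- compute the sum with t two ways
  have hR : ∑ j : Fin (n+1), t j • y (j:ℕ) = 0 := by
    rw [← hcPhi, hPhi_apply]
    have hstep : ∀ j : Fin (n+1), ((∑ i : Fin n, c i • M i) j) • y (j:ℕ)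
        = ∑ i : Fin n, (c i * M i j) • y (j:ℕ) := by
      intro j
      rw [Finset.sum_apply]
      rw [Finset.sum_smul]
      apply Finset.sum_congr rfl
      intro i _
      rw [Pi.smul_apply, smul_eq_mul]
    calc ∑ j : Fin (n+1), ((∑ i : Fin n, c i • M i) j) • y (j:ℕ)
        = ∑ j : Fin (n+1), ∑ i : Fin n, (c i * M i j) • y (j:ℕ) :=
          Finset.sum_congr rfl (fun j _ => hstep j)
      _ = ∑ i : Fin n, ∑ j : Fin (n+1), (c i * M i j) • y (j:ℕ) := Finset.sum_comm
      _ = ∑ i : Fin n, c i • ∑ j : Fin (n+1), M i j • y (j:ℕ) := by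
          apply Finset.sum_congr rfl
          intro i _
          rw [Finset.smul_sum]
          apply Finset.sum_congr rfl
          intro j _
          rw [mul_smul]
      _ = 0 := by
          apply Finset.sum_eq_zero
          intro i _
          rw [hsum i, smul_zero]
  have hL : ∑ j : Fin (n+1), t j • y (j:ℕ)
      = ((2*n).choose (2*k) : ℚ) • y k - (n.choose k : ℚ) • y n := by
    have ht_apply : ∀ j : Fin (n+1), t j
        = ((2*n).choose (2*k) : ℚ) * (if j = kf then 1 else 0)
          - (n.choose k : ℚ) * (if j = nf then 1 else 0) := by
      intro j
      rw [ht]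
      simp [Pi.single_apply]
    calc ∑ j : Fin (n+1), t j • y (j:ℕ)
        = ∑ j : Fin (n+1), ((((2*n).choose (2*k) : ℚ) * (if j = kf then 1 else 0)) • y (j:ℕ)
            - (((n.choose k : ℚ)) * (if j = nf then 1 else 0)) • y (j:ℕ)) := by
          apply Finset.sum_congr rfl
          intro j _
          rw [ht_apply j, sub_smul]
      _ = (∑ j : Fin (n+1), (((2*n).choose (2*k) : ℚ) * (if j = kf then 1 else 0)) • y (j:ℕ))
          - ∑ j : Fin (n+1), (((n.choose k : ℚ)) * (if j = nf then 1 else 0)) • y (j:ℕ) :=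
          Finset.sum_sub_distrib _ _
      _ = ((2*n).choose (2*k) : ℚ) • y k - (n.choose k : ℚ) • y n := by
          congr 1
          · rw [Finset.sum_eq_single kf]
            · rw [if_pos rfl, mul_one, hkf]
            · intro j _ hne
              rw [if_neg hne, mul_zero, zero_smul]
            · intro hmem; exact absurd (Finset.mem_univ _) hmem
          · rw [Finset.sum_eq_single nf]
            · rw [if_pos rfl, mul_one, hnf]
            · intro j _ hne
              rw [if_neg hne, mul_zero, zero_smul]
            · intro hmem; exact absurd (Finset.mem_univ _) hmem
  rw [hL] at hR
  have := sub_eq_zero.mp hR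
  exact this


/-- Let `n ≥ 1` and let `y_0, …, y_n` be elements of a `ℚ`-vector space.
If for every `0 ≤ i ≤ n−1` one has `Σ_{j=0}^{n} (−1)^{n−j} C(2n−i, 2j−i) · y_j = 0`
(with `C(a,b) = 0` when `b < 0`), then `C(2n, 2j) · y_j = C(n, j) · y_n` for every
`0 ≤ j ≤ n`. -/
theorem stmt_7 (n : ℕ) (hn : 1 ≤ n) (V : Type*) [AddCommGroup V] [Module ℚ V]
    (y : ℕ → V)
    (h : ∀ i : ℕ, i ≤ n - 1 →
      ∑ j ∈ Finset.range (n + 1),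
        ((-1 : ℚ) ^ (n - j) *
          (if i ≤ 2 * j then ((2 * n - i).choose (2 * j - i) : ℚ) else 0)) • y j = 0) :
    ∀ j : ℕ, j ≤ n → ((2 * n).choose (2 * j) : ℚ) • y j = (n.choose j : ℚ) • y n :=
  stmt_7' n hn V y h
end

section
/- Let n ≥ 1 and let p ∈ ℝ[t] be a polynomial satisfying: (i) p is even, i.e., p(−t) = p(t); (ii) deg p ≤ 2n; (iii) (t−1)^n divides p. Then there exists a constant c ∈ ℝ such that p = c·(t²−1)^n. (This is the polynomial argument used in the proof of Lemma 6.1(II).) -/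
open Polynomial

/-- Let `n ≥ 1` and let `p ∈ ℝ[t]` be a polynomial which is even
(`p(−t) = p(t)`), of degree at most `2n`, and divisible by `(t−1)^n`. Then
`p = c·(t²−1)^n` for some constant `c ∈ ℝ`. -/
theorem stmt_9 (n : ℕ) (hn : 1 ≤ n) (p : Polynomial ℝ)
    (heven : p.comp (-X) = p)
    (hdeg : p.natDegree ≤ 2 * n)
    (hdvd : (X - 1) ^ n ∣ p) :
    ∃ c : ℝ, p = C c * (X ^ 2 - 1) ^ n := by
  -- (X+1)^n divides p
  have hdvd2 : (X + 1 : ℝ[X]) ^ n ∣ p := by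
    obtain ⟨q, hq⟩ := hdvd
    refine ⟨(-1 : ℝ[X]) ^ n * q.comp (-X), ?_⟩
    have := congrArg (fun r : ℝ[X] => r.comp (-X)) hq
    rw [← heven, this]
    rw [mul_comp, pow_comp, sub_comp, X_comp, one_comp,
      show (-X - 1 : ℝ[X]) = -(X + 1) by ring, neg_pow]
    ring
  have hcop : IsCoprime ((X - 1 : ℝ[X]) ^ n) ((X + 1 : ℝ[X]) ^ n) := by
    apply IsCoprime.pow
    have : IsCoprime (X - C (1 : ℝ)) (X - C (-1 : ℝ)) := by
      apply Polynomial.isCoprime_X_sub_C_of_isUnit_sub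
      norm_num
    simpa using this
  have hdvd3 : ((X ^ 2 - 1 : ℝ[X]) ^ n) ∣ p := by
    have h := hcop.mul_dvd hdvd hdvd2
    have : ((X - 1) * (X + 1) : ℝ[X]) = X ^ 2 - 1 := by ring
    rwa [← mul_pow, this] at h
  obtain ⟨q, hq⟩ := hdvd3
  have hmonic : ((X ^ 2 - 1 : ℝ[X]) ^ n).Monic := by
    apply Monic.pow
    have : (X ^ 2 - 1 : ℝ[X]) = X ^ 2 + C (-1) := by
      simp; ring
    rw [this]
    exact monic_X_pow_add_C _ (by norm_num)
  have hdegb : ((X ^ 2 - 1 : ℝ[X]) ^ n).natDegree = 2 * n := by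
    rw [natDegree_pow]
    have : (X ^ 2 - 1 : ℝ[X]).natDegree = 2 := by
      compute_degree!
    rw [this, mul_comm]
  rcases eq_or_ne q 0 with h0 | h0
  · exact ⟨0, by simp [hq, h0]⟩
  · have hq0 : q.natDegree = 0 := by
      have := hmonic.natDegree_mul' h0
      rw [← hq] at this
      omega
    obtain ⟨c, hc⟩ := natDegree_eq_zero.mp hq0
    exact ⟨c, by rw [hq, ← hc, mul_comm]⟩
end

section
/- Let F be a field and let v_0, v_1, v_2, v_3 ∈ F² be four vectors any two of which are linearly independent (so Δ(v_i,v_j) ≠ 0 for i ≠ j; in particular r(v_0,v_1,v_2,v_3) and 1 − r(v_0,v_1,v_2,v_3) lie in Fˣ, since 1 − r = −Δ(v_0,v_1)Δ(v_2,v_3)/(Δ(v_0,v_3)Δ(v_1,v_2))). Then in Λ²_ℚ V_F one has [1 − r(v_0,v_1,v_2,v_3)] ∧ [r(v_0,v_1,v_2,v_3)] = (1/2) · Alt_4 [ [Δ(v_0,v_1)] ∧ [Δ(v_0,v_2)] ], where Alt_4 denotes the signed sum over all permutations of the four vectors (v_0,v_1,v_2,v_3). -/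
open TensorProduct

/-- The `ℚ`-vector space `V_F := ℚ ⊗_ℤ (Fˣ written additively)`. -/
abbrev VF (F : Type*) [Field F] : Type _ := ℚ ⊗[ℤ] Additive Fˣ

/-- The class `[x] ∈ V_F` of a nonzero element `x ∈ F` (and `0` for `x = 0`). -/
noncomputable def cls {F : Type*} [Field F] (x : F) : VF F := open scoped Classical in
  if h : x = 0 then 0 else (1 : ℚ) ⊗ₜ[ℤ] Additive.ofMul (Units.mk0 x h)

/-- `Δ(a,b) := a_1 b_2 − a_2 b_1` for `a, b ∈ F²`. -/
def dlt {F : Type*} [Field F] (a b : Fin 2 → F) : F := a 0 * b 1 - a 1 * b 0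

/-- The cross-ratio of four vectors in `F²`. -/
def crossRatio {F : Type*} [Field F] (v0 v1 v2 v3 : Fin 2 → F) : F :=
  dlt v0 v2 * dlt v1 v3 / (dlt v0 v3 * dlt v1 v2)

section Cls

variable {F : Type*} [Field F]

lemma cls_def (x : F) (h : x ≠ 0) :
    cls x = (1 : ℚ) ⊗ₜ[ℤ] Additive.ofMul (Units.mk0 x h) := by
  simp [cls, h]

@[simp] lemma cls_zero : cls (0 : F) = 0 := by simp [cls]

lemma cls_neg_one : cls (-1 : F) = 0 := by
  have h : (-1 : F) ≠ 0 := by norm_num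
  rw [cls_def _ h]
  set m : Additive Fˣ := Additive.ofMul (Units.mk0 (-1 : F) h) with hm
  have h2 : (2 : ℤ) • m = 0 := by
    have : Units.mk0 (-1 : F) h * Units.mk0 (-1 : F) h = 1 := by
      ext; simp
    rw [two_smul ℤ m]
    calc m + m = Additive.ofMul (Units.mk0 (-1 : F) h * Units.mk0 (-1 : F) h) := rfl
    _ = 0 := by rw [this]; rfl
  have : (1 : ℚ) ⊗ₜ[ℤ] m = ((2 : ℤ) • (1/2 : ℚ)) ⊗ₜ[ℤ] m := by norm_num
  rw [this, TensorProduct.smul_tmul, h2, TensorProduct.tmul_zero]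

lemma cls_mul (x y : F) (hx : x ≠ 0) (hy : y ≠ 0) :
    cls (x * y) = cls x + cls y := by
  rw [cls_def x hx, cls_def y hy, cls_def (x * y) (mul_ne_zero hx hy)]
  rw [show Units.mk0 (x * y) (mul_ne_zero hx hy) = Units.mk0 x hx * Units.mk0 y hy by
    ext; simp]
  rw [ofMul_mul, TensorProduct.tmul_add]

lemma cls_inv (x : F) : cls x⁻¹ = -cls x := by
  by_cases hx : x = 0
  · simp [hx]
  · rw [cls_def x hx, cls_def x⁻¹ (inv_ne_zero hx)]
    rw [show Units.mk0 x⁻¹ (inv_ne_zero hx) = (Units.mk0 x hx)⁻¹ by ext; simp]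
    rw [ofMul_inv, TensorProduct.tmul_neg]

lemma cls_neg (x : F) : cls (-x) = cls x := by
  by_cases hx : x = 0
  · simp [hx]
  · rw [show -x = (-1 : F) * x by ring, cls_mul _ _ (by norm_num) hx, cls_neg_one, zero_add]

lemma cls_div (x y : F) (hx : x ≠ 0) (hy : y ≠ 0) :
    cls (x / y) = cls x - cls y := by
  rw [div_eq_mul_inv, cls_mul x y⁻¹ hx (inv_ne_zero hy), cls_inv, sub_eq_add_neg]

end Cls

theorem decomposeFin_symm_apply_two' {n : ℕ} (e : Equiv.Perm (Fin (n + 2))) (p : Fin (n + 3)) :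
    Equiv.Perm.decomposeFin.symm (p, e) 2 = Equiv.swap 0 p (e 1).succ := by
  rw [show (2 : Fin (n + 3)) = Fin.succ 1 from rfl, Equiv.Perm.decomposeFin_symm_apply_succ]

theorem perm4_sum {M : Type*} [AddCommGroup M] (g : Fin 4 → Fin 4 → Fin 4 → M) :
    ∑ σ : Equiv.Perm (Fin 4), (Equiv.Perm.sign σ : ℤ) • g (σ 0) (σ 1) (σ 2)
    = g 0 1 2 - g 0 1 3 - g 0 2 1 + g 0 2 3 + g 0 3 1 - g 0 3 2
      - g 1 0 2 + g 1 0 3 + g 1 2 0 - g 1 2 3 - g 1 3 0 + g 1 3 2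
      + g 2 0 1 - g 2 0 3 - g 2 1 0 + g 2 1 3 + g 2 3 0 - g 2 3 1
      - g 3 0 1 + g 3 0 2 + g 3 1 0 - g 3 1 2 - g 3 2 0 + g 3 2 1 := by
  simp only [Finset.univ_perm_fin_succ, ← Finset.univ_product_univ, Finset.sum_map,
    Finset.sum_product, Fin.sum_univ_four, Fin.sum_univ_three, Fin.sum_univ_two,
    Equiv.coe_toEmbedding, Equiv.Perm.decomposeFin.symm_sign,
    Equiv.Perm.decomposeFin_symm_apply_zero, Equiv.Perm.decomposeFin_symm_apply_one,
    decomposeFin_symm_apply_two']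
  norm_num [Equiv.swap_apply_def, Fin.ext_iff]
  simp only [show (Fin.succ 2 : Fin 4) = 3 from rfl, show ((3 : Fin 4) : ℕ) = 3 from rfl]
  norm_num
  abel

/-- The Plücker relation for `2 × 2` minors. -/
lemma pluecker {F : Type*} [Field F] (a b c d : Fin 2 → F) :
    dlt a b * dlt c d - dlt a c * dlt b d + dlt a d * dlt b c = 0 := by
  simp only [dlt]; ring

lemma dlt_swap {F : Type*} [Field F] (a b : Fin 2 → F) : dlt b a = -dlt a b := by
  simp only [dlt]; ring

/-- Let `F` be a field and `v_0, v_1, v_2, v_3 ∈ F²` four vectors, any two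
of which are linearly independent (equivalently `Δ(v_i,v_j) ≠ 0` for `i ≠ j`). Then in
`Λ²_ℚ V_F` (realized inside the exterior algebra of `V_F` over `ℚ`) one has
`[1 − r(v_0,v_1,v_2,v_3)] ∧ [r(v_0,v_1,v_2,v_3)]
   = (1/2) · Alt_4 [ [Δ(v_0,v_1)] ∧ [Δ(v_0,v_2)] ]`. -/
theorem stmt_12 (F : Type*) [Field F] (v : Fin 4 → Fin 2 → F)
    (h : ∀ i j : Fin 4, i ≠ j → dlt (v i) (v j) ≠ 0) :
    ExteriorAlgebra.ι ℚ (cls (1 - crossRatio (v 0) (v 1) (v 2) (v 3))) *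
      ExteriorAlgebra.ι ℚ (cls (crossRatio (v 0) (v 1) (v 2) (v 3)))
    = (1 / 2 : ℚ) • ∑ σ : Equiv.Perm (Fin 4), (Equiv.Perm.sign σ : ℤ) •
        (ExteriorAlgebra.ι ℚ (cls (dlt (v (σ 0)) (v (σ 1)))) *
         ExteriorAlgebra.ι ℚ (cls (dlt (v (σ 0)) (v (σ 2))))) := by
  have h01 := h 0 1 (by decide); have h02 := h 0 2 (by decide)
  have h03 := h 0 3 (by decide); have h12 := h 1 2 (by decide)
  have h13 := h 1 3 (by decide); have h23 := h 2 3 (by decide)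
  set A := cls (dlt (v 0) (v 1)) with hA
  set B := cls (dlt (v 2) (v 3)) with hB
  set C := cls (dlt (v 0) (v 3)) with hC
  set D := cls (dlt (v 1) (v 2)) with hD
  set E := cls (dlt (v 0) (v 2)) with hE
  set Fc := cls (dlt (v 1) (v 3)) with hF
  -- the cross ratio and its complement in terms of the Δ's
  have hr : cls (crossRatio (v 0) (v 1) (v 2) (v 3)) = E + Fc - (C + D) := by
    rw [crossRatio, cls_div _ _ (mul_ne_zero h02 h13) (mul_ne_zero h03 h12),
      cls_mul _ _ h02 h13, cls_mul _ _ h03 h12]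
  have h1r : cls (1 - crossRatio (v 0) (v 1) (v 2) (v 3)) = A + B - (C + D) := by
    have key : 1 - crossRatio (v 0) (v 1) (v 2) (v 3)
        = -(dlt (v 0) (v 1) * dlt (v 2) (v 3)) / (dlt (v 0) (v 3) * dlt (v 1) (v 2)) := by
      rw [crossRatio, eq_div_iff (mul_ne_zero h03 h12), sub_mul,
        div_mul_cancel₀ _ (mul_ne_zero h03 h12)]
      linear_combination pluecker (v 0) (v 1) (v 2) (v 3)
    rw [key, cls_div _ _ (by simpa using mul_ne_zero h01 h23) (mul_ne_zero h03 h12),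
      cls_neg, cls_mul _ _ h01 h23, cls_mul _ _ h03 h12]
  -- rewrite the alternating sum
  rw [perm4_sum (fun i j k => ExteriorAlgebra.ι ℚ (cls (dlt (v i) (v j))) *
      ExteriorAlgebra.ι ℚ (cls (dlt (v i) (v k))))]
  have sym : ∀ i j : Fin 4, cls (dlt (v j) (v i)) = cls (dlt (v i) (v j)) := fun i j => by
    rw [dlt_swap, cls_neg]
  have s10 : cls (dlt (v 1) (v 0)) = A := by rw [sym 0 1]
  have s20 : cls (dlt (v 2) (v 0)) = E := by rw [sym 0 2]
  have s30 : cls (dlt (v 3) (v 0)) = C := by rw [sym 0 3]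
  have s21 : cls (dlt (v 2) (v 1)) = D := by rw [sym 1 2]
  have s31 : cls (dlt (v 3) (v 1)) = Fc := by rw [sym 1 3]
  have s32 : cls (dlt (v 3) (v 2)) = B := by rw [sym 2 3]
  simp only [s10, s20, s30, s21, s31, s32, hr, h1r, ← hA, ← hB, ← hC, ← hD, ← hE, ← hF]
  -- now pure exterior algebra
  have anti : ∀ x y : VF F, ExteriorAlgebra.ι ℚ y * ExteriorAlgebra.ι ℚ x
      = -(ExteriorAlgebra.ι ℚ x * ExteriorAlgebra.ι ℚ y) := fun x y => by
    rw [eq_neg_iff_add_eq_zero, add_comm]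
    exact ExteriorAlgebra.ι_add_mul_swap x y
  simp only [map_add, map_sub, add_mul, sub_mul, mul_add, mul_sub,
    ExteriorAlgebra.ι_sq_zero, anti A E, anti A C, anti A D, anti A Fc, anti C E, anti B E,
    anti C Fc, anti D Fc, anti D E, anti B D, anti C D, anti B C, anti B Fc]
  module
end
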